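/- arXiv:1103.3366 — 8 statements merged into one kernel-verified Lean document; each statement's English description precedes it below -/
import Mathlib

section
/- Let g : ℝ → ℝ be continuously differentiable with |g′(x)| ≤ C for all x ∈ ℝ, and let α : ℝ × ℝ → ℝ be twice continuously differentiable (jointly in (y,z)) and satisfy the Doss ODE ∂α/∂z(y,z) = g(α(y,z)) for all (y,z) ∈ ℝ × ℝ, with initial condition α(y,0) = y for all y ∈ ℝ. Then for all (y,z) ∈ ℝ × ℝ, exp(−C|z|) ≤ ∂α/∂y(y,z) ≤ exp(C|z|). -/
/-!
The partial derivative `u(z) = ∂α/∂y (y,z)` solves the linear equation `u' = g'(α(y,z)) u`: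
differentiate the ODE in `y` and use the symmetry of the second derivative of `α`.
With `u(0) = 1` this gives `u(z) = exp (∫₀ᶻ g'(α(y,t)) dt)`, and `|g'| ≤ C` bounds the
exponent by `C|z|`.
-/

open Real

section PartialDerivatives

variable {F : Type*} [NormedAddCommGroup F] [NormedSpace ℝ F] {α : ℝ × ℝ → F}

theorem HasFDerivAt.hasDerivAt_comp_prodMk_left {A : ℝ × ℝ →L[ℝ] F} {y z : ℝ}
    (h : HasFDerivAt α A (y, z)) : HasDerivAt (fun y' => α (y', z)) (A (1, 0)) y :=
  h.comp_hasDerivAt y ((hasDerivAt_id y).prodMk (hasDerivAt_const y z))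

theorem HasFDerivAt.hasDerivAt_comp_prodMk_right {A : ℝ × ℝ →L[ℝ] F} {y z : ℝ}
    (h : HasFDerivAt α A (y, z)) : HasDerivAt (fun z' => α (y, z')) (A (0, 1)) z :=
  h.comp_hasDerivAt z ((hasDerivAt_const z y).prodMk (hasDerivAt_id z))

theorem ContDiff.hasDerivAt_partial_fst_of_partial_snd (hα : ContDiff ℝ 2 α) {y z : ℝ} {d : F}
    (hd : HasDerivAt (fun y' => fderiv ℝ α (y', z) (0, 1)) d y) :
    HasDerivAt (fun z' => fderiv ℝ α (y, z') (1, 0)) d z := by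
  have hD : HasFDerivAt (fderiv ℝ α) (fderiv ℝ (fderiv ℝ α) (y, z)) (y, z) :=
    ((hα.fderiv_right le_rfl).differentiable one_ne_zero _).hasFDerivAt
  have hdy : fderiv ℝ (fderiv ℝ α) (y, z) (1, 0) (0, 1) = d := by
    simpa using (hD.hasDerivAt_comp_prodMk_left.clm_apply (hasDerivAt_const y _)).unique hd
  have hsymm : fderiv ℝ (fderiv ℝ α) (y, z) (0, 1) (1, 0) = d := by
    rw [(hα.contDiffAt.isSymmSndFDerivAt (by simp)) (0, 1) (1, 0), hdy]
  simpa [hsymm] using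
    hD.hasDerivAt_comp_prodMk_right.clm_apply (hasDerivAt_const z ((1 : ℝ), (0 : ℝ)))

end PartialDerivatives

theorem eq_mul_exp_integral_of_hasDerivAt {u c : ℝ → ℝ} (hc : Continuous c)
    (hu : ∀ s, HasDerivAt u (c s * u s) s) (s : ℝ) :
    u s = u 0 * exp (∫ t in (0 : ℝ)..s, c t) := by
  set h : ℝ → ℝ := fun s => ∫ t in (0 : ℝ)..s, c t
  have hh : ∀ s, HasDerivAt h (c s) s := fun s =>
    intervalIntegral.integral_hasDerivAt_right (hc.intervalIntegrable 0 s)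
      hc.aestronglyMeasurable.stronglyMeasurableAtFilter hc.continuousAt
  have hconst : ∀ s, HasDerivAt (fun s => u s * exp (-h s)) 0 s := fun s =>
    ((hu s).mul (hh s).neg.exp).congr_deriv (by ring)
  have hv : u s * exp (-h s) = u 0 * exp (-h 0) :=
    is_const_of_deriv_eq_zero (fun t => (hconst t).differentiableAt)
      (fun t => (hconst t).deriv) s 0
  have hh0 : h 0 = 0 := intervalIntegral.integral_same
  rw [hh0, neg_zero, exp_zero, mul_one] at hv
  rw [← hv, mul_assoc, ← exp_add, neg_add_cancel, exp_zero, mul_one]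

theorem exp_neg_mul_abs_le_exp_integral {c : ℝ → ℝ} {C : ℝ} (hcC : ∀ t, |c t| ≤ C) (z : ℝ) :
    exp (-(C * |z|)) ≤ exp (∫ t in (0 : ℝ)..z, c t) ∧
      exp (∫ t in (0 : ℝ)..z, c t) ≤ exp (C * |z|) := by
  have hbound : |∫ t in (0 : ℝ)..z, c t| ≤ C * |z| := by
    simpa using intervalIntegral.norm_integral_le_of_norm_le_const (a := 0) (b := z)
      (f := c) fun t _ => hcC t
  obtain ⟨hl, hr⟩ := abs_le.mp hbound
  exact ⟨exp_le_exp.mpr hl, exp_le_exp.mpr hr⟩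

theorem hasDerivAt_partial_fst_of_doss_ode {g : ℝ → ℝ} (hg : Differentiable ℝ g)
    {α : ℝ × ℝ → ℝ} (hα : ContDiff ℝ 2 α)
    (hode : ∀ y z : ℝ, HasDerivAt (fun z' => α (y, z')) (g (α (y, z))) z) (y z : ℝ) :
    HasDerivAt (fun z' => fderiv ℝ α (y, z') (1, 0))
      (deriv g (α (y, z)) * fderiv ℝ α (y, z) (1, 0)) z := by
  have hα1 : Differentiable ℝ α := hα.differentiable two_ne_zero
  have hpartial_snd : (fun y' => fderiv ℝ α (y', z) (0, 1)) = fun y' => g (α (y', z)) :=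
    funext fun y' => (hα1 _).hasFDerivAt.hasDerivAt_comp_prodMk_right.unique (hode y' z)
  refine hα.hasDerivAt_partial_fst_of_partial_snd ?_
  rw [hpartial_snd]
  exact (hg _).hasDerivAt.comp y (hα1 _).hasFDerivAt.hasDerivAt_comp_prodMk_left

/-- If `g` is `C¹` with `|g'| ≤ C`, `α` is `C²` and solves the Doss ODE
`∂α/∂z (y,z) = g (α (y,z))`, `α (y,0) = y`, then
`exp (-C|z|) ≤ ∂α/∂y (y,z) ≤ exp (C|z|)`. -/
theorem stmt_2 (g : ℝ → ℝ) (hg : ContDiff ℝ 1 g) (C : ℝ)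
    (hgC : ∀ x : ℝ, |deriv g x| ≤ C)
    (α : ℝ × ℝ → ℝ) (hα : ContDiff ℝ 2 α)
    (hode : ∀ y z : ℝ, HasDerivAt (fun z' => α (y, z')) (g (α (y, z))) z)
    (hinit : ∀ y : ℝ, α (y, 0) = y) (y z : ℝ) :
    Real.exp (-(C * |z|)) ≤ deriv (fun y' => α (y', z)) y ∧
      deriv (fun y' => α (y', z)) y ≤ Real.exp (C * |z|) := by
  have hα1 : Differentiable ℝ α := hα.differentiable two_ne_zero
  have hpartial : ∀ s, deriv (fun y' => α (y', s)) y = fderiv ℝ α (y, s) (1, 0) := fun s =>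
    (hα1 _).hasFDerivAt.hasDerivAt_comp_prodMk_left.deriv
  have hinit' : fderiv ℝ α (y, 0) (1, 0) = 1 := by
    rw [← hpartial, funext hinit, deriv_id'']
  have hc : Continuous fun s => deriv g (α (y, s)) :=
    (hg.continuous_deriv le_rfl).comp (hα.continuous.comp (Continuous.prodMk_right y))
  rw [hpartial, eq_mul_exp_integral_of_hasDerivAt hc
    (hasDerivAt_partial_fst_of_doss_ode (hg.differentiable one_ne_zero) hα hode y) z,
    hinit', one_mul]
  exact exp_neg_mul_abs_le_exp_integral (fun t => hgC _) z
end

section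
/- Let g : ℝ → ℝ be twice continuously differentiable with bounded first and second derivatives, and let α : ℝ × ℝ → ℝ be three times continuously differentiable (jointly in (y,z)) and satisfy the Doss ODE ∂α/∂z(y,z) = g(α(y,z)) for all (y,z) ∈ ℝ × ℝ, with initial condition α(y,0) = y for all y ∈ ℝ. Then there exists a constant C > 0, depending only on sup|g′| and sup|g″|, such that |∂²α/∂y²(y,z)| ≤ exp(C|z|) for all (y,z) ∈ ℝ × ℝ. -/
/-!
Differentiating the Doss equation in `y` (mixed partials of the `C³` map `α` commute) shows that
`u = ∂α/∂y` and `v = ∂²α/∂y²` solve the variational equations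
`∂u/∂z = g'(α) u` and `∂v/∂z = g''(α) u² + g'(α) v`, with `u(y,0) = 1`, `v(y,0) = 0`.
For `z ≥ 0`, Grönwall gives `|u| ≤ exp (C₁ z)`, so the source term of the second equation is
at most `C₂ exp (2 C₁ z)`, and Grönwall again gives `|v| ≤ C₂ z exp (3 C₁ z) ≤ exp ((3 C₁ + C₂) z)`.
Negative `z` reduces to positive `z` through the reflection `z ↦ -z`, which replaces `g` by `-g`.
-/

open Real Set

noncomputable section

def partialY (f : ℝ × ℝ → ℝ) (x : ℝ × ℝ) : ℝ := fderiv ℝ f x (1, 0)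

def partialZ (f : ℝ × ℝ → ℝ) (x : ℝ × ℝ) : ℝ := fderiv ℝ f x (0, 1)

section PartialDerivatives

variable {f a b : ℝ × ℝ → ℝ} {x : ℝ × ℝ}

theorem hasDerivAt_partialY {y z : ℝ} (hf : DifferentiableAt ℝ f (y, z)) :
    HasDerivAt (fun t => f (t, z)) (partialY f (y, z)) y :=
  hf.hasFDerivAt.comp_hasDerivAt y ((hasDerivAt_id y).prodMk (hasDerivAt_const y z))

theorem hasDerivAt_partialZ {y z : ℝ} (hf : DifferentiableAt ℝ f (y, z)) :
    HasDerivAt (fun t => f (y, t)) (partialZ f (y, z)) z :=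
  hf.hasFDerivAt.comp_hasDerivAt z ((hasDerivAt_const z y).prodMk (hasDerivAt_id z))

theorem ContDiff.partialY {m n : WithTop ℕ∞} (hf : ContDiff ℝ n f) (hmn : m + 1 ≤ n) :
    ContDiff ℝ m (partialY f) :=
  (hf.fderiv_right hmn).clm_apply contDiff_const

theorem partialZ_partialY (hf : ContDiffAt ℝ 2 f x) :
    partialZ (partialY f) x = partialY (partialZ f) x := by
  have hf' : DifferentiableAt ℝ (fderiv ℝ f) x :=
    (hf.fderiv_right (m := 1) le_rfl).differentiableAt one_ne_zero
  have apply_const (v w : ℝ × ℝ) :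
      fderiv ℝ (fun x' => fderiv ℝ f x' v) x w = fderiv ℝ (fderiv ℝ f) x w v := by
    rw [(hf'.hasFDerivAt.clm_apply (hasFDerivAt_const v x)).fderiv]
    simp
  change fderiv ℝ (fun x' => fderiv ℝ f x' (1, 0)) x (0, 1)
    = fderiv ℝ (fun x' => fderiv ℝ f x' (0, 1)) x (1, 0)
  rw [apply_const, apply_const]
  exact hf.isSymmSndFDerivAt (by simp) _ _

theorem partialY_comp {h : ℝ → ℝ} (hh : DifferentiableAt ℝ h (f x))
    (hf : DifferentiableAt ℝ f x) :
    partialY (fun x' => h (f x')) x = deriv h (f x) * partialY f x := by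
  rw [partialY, partialY, show (fun x' => h (f x')) = h ∘ f from rfl,
    (hh.hasDerivAt.comp_hasFDerivAt x hf.hasFDerivAt).fderiv]
  rfl

theorem partialY_mul (ha : DifferentiableAt ℝ a x) (hb : DifferentiableAt ℝ b x) :
    partialY (fun x' => a x' * b x') x = partialY a x * b x + a x * partialY b x := by
  rw [partialY, partialY, partialY, fderiv_fun_mul ha hb]
  simp only [add_apply, smul_apply, smul_eq_mul]
  ring

theorem iteratedDeriv_two_eq_partialY_partialY (hf : ContDiff ℝ 2 f) (y z : ℝ) :
    iteratedDeriv 2 (fun y' => f (y', z)) y = partialY (partialY f) (y, z) := by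
  have hu : Differentiable ℝ (partialY f) :=
    (hf.partialY (m := 1) le_rfl).differentiable one_ne_zero
  rw [iteratedDeriv_succ, iteratedDeriv_one,
    funext fun y' => (hasDerivAt_partialY (hf.differentiable two_ne_zero (y', z))).deriv]
  exact (hasDerivAt_partialY (hu (y, z))).deriv

end PartialDerivatives

end

section LinearODE

theorem abs_le_mul_exp_of_hasDerivAt_mul {f a : ℝ → ℝ} {K : ℝ}
    (hf : ∀ s, HasDerivAt f (a s * f s) s) (ha : ∀ s, |a s| ≤ K) {s : ℝ} (hs : 0 ≤ s) :
    |f s| ≤ |f 0| * exp (K * s) := by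
  have h := norm_le_gronwallBound_of_norm_deriv_right_le (ε := 0) (a := 0) (b := s)
    (fun t _ => (hf t).continuousAt.continuousWithinAt) (fun t _ => (hf t).hasDerivWithinAt)
    le_rfl (fun t _ => by
      rw [add_zero, norm_mul]
      exact mul_le_mul_of_nonneg_right (ha t) (norm_nonneg _)) s ⟨hs, le_rfl⟩
  simpa [gronwallBound_ε0] using h

theorem gronwallBound_zero_le {K ε x : ℝ} (hK : 0 ≤ K) (hε : 0 ≤ ε) :
    gronwallBound 0 K ε x ≤ ε * x * exp (K * x) := by
  rcases hK.eq_or_lt with rfl | hK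
  · simp [gronwallBound_K0]
  simp only [gronwallBound_of_K_ne_0 hK.ne', zero_mul, zero_add]
  -- `exp y - 1 ≤ y * exp y` is `1 - y ≤ exp (-y)` multiplied by `exp y`.
  have hexp : exp (K * x) - 1 ≤ K * x * exp (K * x) := by
    have := mul_le_mul_of_nonneg_right (one_sub_le_exp_neg (K * x)) (exp_pos (K * x)).le
    rw [← exp_add, neg_add_cancel, exp_zero] at this
    linarith
  calc ε / K * (exp (K * x) - 1) ≤ ε / K * (K * x * exp (K * x)) := by gcongr
    _ = ε * x * exp (K * x) := by field_simp

theorem abs_le_mul_mul_exp_of_abs_deriv_le {f f' : ℝ → ℝ} {K ε z : ℝ}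
    (hf : ∀ s, HasDerivAt f (f' s) s) (h0 : f 0 = 0)
    (bound : ∀ s ∈ Ico 0 z, |f' s| ≤ K * |f s| + ε) (hK : 0 ≤ K) (hε : 0 ≤ ε) (hz : 0 ≤ z) :
    |f z| ≤ ε * z * exp (K * z) := by
  have h := norm_le_gronwallBound_of_norm_deriv_right_le (δ := 0) (a := 0) (b := z)
    (fun t _ => (hf t).continuousAt.continuousWithinAt) (fun t _ => (hf t).hasDerivWithinAt)
    (by simp [h0]) bound z ⟨hz, le_rfl⟩
  rw [sub_zero] at h
  exact h.trans (gronwallBound_zero_le hK hε)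

end LinearODE

structure IsDossFlow (g : ℝ → ℝ) (α : ℝ × ℝ → ℝ) : Prop where
  contDiff : ContDiff ℝ 3 α
  hasDerivAt : ∀ y z : ℝ, HasDerivAt (fun z' => α (y, z')) (g (α (y, z))) z
  initial : ∀ y : ℝ, α (y, 0) = y

namespace IsDossFlow

variable {g : ℝ → ℝ} {α : ℝ × ℝ → ℝ} {C₁ C₂ : ℝ}

theorem differentiable (hα : IsDossFlow g α) : Differentiable ℝ α :=
  hα.contDiff.differentiable (by norm_num)

theorem contDiff_partialY (hα : IsDossFlow g α) : ContDiff ℝ 2 (partialY α) :=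
  hα.contDiff.partialY le_rfl

theorem contDiff_partialY_partialY (hα : IsDossFlow g α) : ContDiff ℝ 1 (partialY (partialY α)) :=
  hα.contDiff_partialY.partialY le_rfl

theorem partialZ_eq (hα : IsDossFlow g α) : partialZ α = fun x => g (α x) :=
  funext fun ⟨y, z⟩ => (hasDerivAt_partialZ (hα.differentiable _)).unique (hα.hasDerivAt y z)

theorem partialY_eq_one (hα : IsDossFlow g α) (y : ℝ) : partialY α (y, 0) = 1 :=
  (hasDerivAt_partialY (hα.differentiable _)).unique <| by
    simp only [hα.initial]
    exact hasDerivAt_id y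

theorem partialY_partialY_eq_zero (hα : IsDossFlow g α) (y : ℝ) :
    partialY (partialY α) (y, 0) = 0 :=
  (hasDerivAt_partialY (hα.contDiff_partialY.differentiable two_ne_zero _)).unique <| by
    simp only [hα.partialY_eq_one]
    exact hasDerivAt_const y 1

theorem partialZ_partialY (hg : Differentiable ℝ g) (hα : IsDossFlow g α) (x : ℝ × ℝ) :
    partialZ (partialY α) x = deriv g (α x) * partialY α x := by
  rw [_root_.partialZ_partialY (hα.contDiff.contDiffAt.of_le (by norm_num)), hα.partialZ_eq,
    partialY_comp (hg _) (hα.differentiable x)]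

theorem partialZ_partialY_partialY (hg : ContDiff ℝ 2 g) (hα : IsDossFlow g α) (x : ℝ × ℝ) :
    partialZ (partialY (partialY α)) x =
      deriv (deriv g) (α x) * partialY α x ^ 2 + deriv g (α x) * partialY (partialY α) x := by
  have hg' : Differentiable ℝ (deriv g) := (hg.iterate_deriv' 1 1).differentiable (by norm_num)
  have hu := hα.contDiff_partialY
  rw [_root_.partialZ_partialY hu.contDiffAt,
    funext (hα.partialZ_partialY (hg.differentiable two_ne_zero)),
    partialY_mul (a := fun x' => deriv g (α x')) ((hg' _).comp x (hα.differentiable x))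
      (hu.differentiable two_ne_zero x),
    partialY_comp (hg' _) (hα.differentiable x)]
  ring

theorem abs_partialY_le (hg : Differentiable ℝ g) (hg₁ : ∀ x, |deriv g x| ≤ C₁)
    (hα : IsDossFlow g α) (y : ℝ) {s : ℝ} (hs : 0 ≤ s) :
    |partialY α (y, s)| ≤ exp (C₁ * s) := by
  have hu : ∀ t, HasDerivAt (fun t' => partialY α (y, t'))
      (deriv g (α (y, t)) * partialY α (y, t)) t := fun t => by
    rw [← hα.partialZ_partialY hg]
    exact hasDerivAt_partialZ (hα.contDiff_partialY.differentiable two_ne_zero _)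
  simpa [hα.partialY_eq_one] using abs_le_mul_exp_of_hasDerivAt_mul hu (fun t => hg₁ _) hs

theorem abs_partialY_partialY_le (hg : ContDiff ℝ 2 g) (hg₁ : ∀ x, |deriv g x| ≤ C₁)
    (hg₂ : ∀ x, |deriv (deriv g) x| ≤ C₂) (hα : IsDossFlow g α) (y : ℝ) {z : ℝ} (hz : 0 ≤ z) :
    |partialY (partialY α) (y, z)| ≤ exp ((3 * C₁ + C₂) * z) := by
  have hC₁ : 0 ≤ C₁ := (abs_nonneg _).trans (hg₁ 0)
  have hC₂ : 0 ≤ C₂ := (abs_nonneg _).trans (hg₂ 0)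
  set u := partialY α
  set v := partialY u
  have hv : ∀ s, HasDerivAt (fun t => v (y, t))
      (deriv (deriv g) (α (y, s)) * u (y, s) ^ 2 + deriv g (α (y, s)) * v (y, s)) s := fun s => by
    rw [← hα.partialZ_partialY_partialY hg]
    exact hasDerivAt_partialZ (hα.contDiff_partialY_partialY.differentiable one_ne_zero _)
  have bound : ∀ s ∈ Ico 0 z,
      |deriv (deriv g) (α (y, s)) * u (y, s) ^ 2 + deriv g (α (y, s)) * v (y, s)|
        ≤ C₁ * |v (y, s)| + C₂ * exp (2 * C₁ * z) := by
    rintro s ⟨hs₀, hsz⟩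
    have hu : u (y, s) ^ 2 ≤ exp (2 * C₁ * z) := calc
      u (y, s) ^ 2 = |u (y, s)| ^ 2 := (sq_abs _).symm
      _ ≤ exp (C₁ * s) ^ 2 := by
        gcongr
        exact hα.abs_partialY_le (hg.differentiable two_ne_zero) hg₁ y hs₀
      _ = exp (2 * C₁ * s) := by rw [← exp_nat_mul]; ring_nf
      _ ≤ exp (2 * C₁ * z) := by gcongr
    calc |deriv (deriv g) (α (y, s)) * u (y, s) ^ 2 + deriv g (α (y, s)) * v (y, s)|
      _ ≤ |deriv (deriv g) (α (y, s)) * u (y, s) ^ 2| + |deriv g (α (y, s)) * v (y, s)| :=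
          abs_add_le _ _
      _ = |deriv (deriv g) (α (y, s))| * u (y, s) ^ 2 + |deriv g (α (y, s))| * |v (y, s)| := by
          rw [abs_mul, abs_mul, abs_sq]
      _ ≤ C₂ * exp (2 * C₁ * z) + C₁ * |v (y, s)| := by
          gcongr
          exacts [hg₂ _, hg₁ _]
      _ = C₁ * |v (y, s)| + C₂ * exp (2 * C₁ * z) := add_comm _ _
  calc |v (y, z)| ≤ C₂ * exp (2 * C₁ * z) * z * exp (C₁ * z) :=
        abs_le_mul_mul_exp_of_abs_deriv_le hv (hα.partialY_partialY_eq_zero y) bound hC₁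
          (by positivity) hz
    _ = C₂ * z * exp (3 * C₁ * z) := by
        rw [show 3 * C₁ * z = 2 * C₁ * z + C₁ * z by ring, exp_add]
        ring
    _ ≤ exp (C₂ * z) * exp (3 * C₁ * z) := by
        gcongr
        linarith [add_one_le_exp (C₂ * z)]
    _ = exp ((3 * C₁ + C₂) * z) := by
        rw [← exp_add]
        ring_nf

theorem reflect (hα : IsDossFlow g α) :
    IsDossFlow (fun x => -g x) (fun p => α (p.1, -p.2)) where
  contDiff := hα.contDiff.comp (contDiff_fst.prodMk contDiff_snd.neg)
  hasDerivAt y z := by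
    simpa [Function.comp_def] using (hα.hasDerivAt y (-z)).comp z (hasDerivAt_neg z)
  initial y := by simpa using hα.initial y

theorem abs_iteratedDeriv_two_le (hg : ContDiff ℝ 2 g) (hg₁ : ∀ x, |deriv g x| ≤ C₁)
    (hg₂ : ∀ x, |deriv (deriv g) x| ≤ C₂) (hα : IsDossFlow g α) (y z : ℝ) :
    |iteratedDeriv 2 (fun y' => α (y', z)) y| ≤ exp ((3 * C₁ + C₂) * |z|) := by
  rcases le_total 0 z with hz | hz
  · rw [iteratedDeriv_two_eq_partialY_partialY (hα.contDiff.of_le (by norm_num)), abs_of_nonneg hz]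
    exact hα.abs_partialY_partialY_le hg hg₁ hg₂ y hz
  · have h := hα.reflect.abs_partialY_partialY_le hg.neg (by simpa using hg₁) (by simpa using hg₂)
      y (neg_nonneg.2 hz)
    rw [← iteratedDeriv_two_eq_partialY_partialY (hα.reflect.contDiff.of_le (by norm_num))] at h
    simpa [abs_of_nonpos hz] using h

end IsDossFlow

/-- If `g` is `C²` with `|g'| ≤ C₁`, `|g''| ≤ C₂` and `α` is `C³`
and solves the Doss ODE `∂α/∂z (y,z) = g (α (y,z))`, `α (y,0) = y`, then there is a
constant `C > 0`, depending only on the bounds `C₁, C₂`, such that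
`|∂²α/∂y² (y,z)| ≤ exp (C|z|)`. -/
theorem stmt_4 (C₁ C₂ : ℝ) :
    ∃ C > 0, ∀ g : ℝ → ℝ, ContDiff ℝ 2 g →
      (∀ x : ℝ, |deriv g x| ≤ C₁) → (∀ x : ℝ, |iteratedDeriv 2 g x| ≤ C₂) →
      ∀ α : ℝ × ℝ → ℝ, ContDiff ℝ 3 α →
      (∀ y z : ℝ, HasDerivAt (fun z' => α (y, z')) (g (α (y, z))) z) →
      (∀ y : ℝ, α (y, 0) = y) →
      ∀ y z : ℝ, |iteratedDeriv 2 (fun y' => α (y', z)) y| ≤ Real.exp (C * |z|) := by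
  refine ⟨3 * |C₁| + |C₂| + 1, by positivity, fun g hg hg₁ hg₂ α hα hode hinit y z => ?_⟩
  have hg₂' : ∀ x, |deriv (deriv g) x| ≤ C₂ := by
    simpa only [iteratedDeriv_succ', iteratedDeriv_zero] using hg₂
  calc |iteratedDeriv 2 (fun y' => α (y', z)) y| ≤ exp ((3 * C₁ + C₂) * |z|) :=
        IsDossFlow.abs_iteratedDeriv_two_le hg hg₁ hg₂' ⟨hα, hode, hinit⟩ y z
    _ ≤ exp ((3 * |C₁| + |C₂| + 1) * |z|) := by
        gcongr exp (?_ * _)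
        linarith [le_abs_self C₁, le_abs_self C₂]
end

section
/- Let g : ℝ → ℝ be three times continuously differentiable with bounded derivatives of orders one, two and three, and let α : ℝ × ℝ → ℝ be four times continuously differentiable (jointly in (y,z)) and satisfy the Doss ODE ∂α/∂z(y,z) = g(α(y,z)) for all (y,z) ∈ ℝ × ℝ, with initial condition α(y,0) = y for all y ∈ ℝ. Then there exists a constant C > 0, depending only on sup|g′|, sup|g″| and sup|g‴|, such that |∂³α/∂y³(y,z)| ≤ exp(C|z|) for all (y,z) ∈ ℝ × ℝ. -/
/-!
Write `Aₖ = ∂ᵏα/∂yᵏ`. Differentiating the Doss equation in `y` (the mixed partials of the `C⁴`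
map `α` commute) gives the linear variational equations
`∂A₁/∂z = g'(α) A₁`, `∂A₂/∂z = g'(α) A₂ + g''(α) A₁²`,
`∂A₃/∂z = g'(α) A₃ + g'''(α) A₁³ + 3 g''(α) A₁ A₂`,
with `A₁ = 1` and `A₂ = A₃ = 0` at `z = 0`. For `u' = a u + f` with `|a| ≤ K` and `|f| ≤ M`,
Grönwall's inequality gives `|u z| ≤ (|u 0| + M |z|) e^{K|z|}`; applying it to `A₁`, `A₂`, `A₃` in
turn and absorbing the polynomial factors by `x ≤ eˣ` yields `|A₃| ≤ e^{(5K + 4L₂ + L₃)|z|}`.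
-/

open Real

lemma mul_exp_le_exp_add (x y : ℝ) : x * exp y ≤ exp (x + y) := by
  rw [exp_add]
  gcongr
  linarith [add_one_le_exp x]

lemma gronwallBound_le {δ K ε : ℝ} (hK : 0 ≤ K) (hε : 0 ≤ ε) (x : ℝ) :
    gronwallBound δ K ε x ≤ (δ + ε * x) * exp (K * x) := by
  rcases hK.eq_or_lt with rfl | hK
  · simp [gronwallBound_K0]
  have hexp : exp (K * x) - 1 ≤ K * x * exp (K * x) := by
    have := one_sub_le_exp_neg (K * x)
    have h := mul_le_mul_of_nonneg_right this (exp_pos (K * x)).le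
    rw [← exp_add, neg_add_cancel, exp_zero] at h
    linarith
  rw [gronwallBound_of_K_ne_0 hK.ne']
  have hε_part : ε / K * (exp (K * x) - 1) ≤ ε * x * exp (K * x) :=
    calc ε / K * (exp (K * x) - 1) ≤ ε / K * (K * x * exp (K * x)) := by gcongr
      _ = ε * x * exp (K * x) := by field_simp
  linarith

lemma abs_le_of_abs_deriv_le_of_nonneg {u u' : ℝ → ℝ} {δ K ε z : ℝ}
    (hu : ∀ t, HasDerivAt u (u' t) t) (hK : 0 ≤ K) (hε : 0 ≤ ε) (h0 : |u 0| ≤ δ)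
    (bound : ∀ t ∈ Set.Icc 0 z, |u' t| ≤ K * |u t| + ε) (hz : 0 ≤ z) :
    |u z| ≤ (δ + ε * z) * exp (K * z) := by
  have := norm_le_gronwallBound_of_norm_deriv_right_le (f := u)
    (fun t _ => (hu t).continuousAt.continuousWithinAt) (fun t _ => (hu t).hasDerivWithinAt)
    h0 (fun t ht => bound t (Set.Ico_subset_Icc_self ht)) z ⟨hz, le_rfl⟩
  rw [sub_zero] at this
  exact this.trans (gronwallBound_le hK hε z)

theorem abs_le_of_abs_deriv_le {u u' : ℝ → ℝ} {δ K ε z : ℝ}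
    (hu : ∀ t, HasDerivAt u (u' t) t) (hK : 0 ≤ K) (hε : 0 ≤ ε) (h0 : |u 0| ≤ δ)
    (bound : ∀ t, |t| ≤ |z| → |u' t| ≤ K * |u t| + ε) :
    |u z| ≤ (δ + ε * |z|) * exp (K * |z|) := by
  rcases le_total 0 z with hz | hz
  · rw [abs_of_nonneg hz]
    refine abs_le_of_abs_deriv_le_of_nonneg hu hK hε h0 (fun t ht => bound t ?_) hz
    rw [abs_of_nonneg ht.1, abs_of_nonneg hz]; exact ht.2
  · have hu' : ∀ t, HasDerivAt (fun s => u (-s)) (-u' (-t)) t := fun t => by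
      simpa [Function.comp_def] using (hu (-t)).comp t (hasDerivAt_neg t)
    have hbound : ∀ t ∈ Set.Icc 0 (-z), |-u' (-t)| ≤ K * |u (-t)| + ε := fun t ht => by
      rw [abs_neg]
      exact bound (-t) (by rw [abs_neg, abs_of_nonneg ht.1, abs_of_nonpos hz]; exact ht.2)
    have := abs_le_of_abs_deriv_le_of_nonneg hu' hK hε (by simpa using h0) hbound
      (neg_nonneg.2 hz)
    simpa [abs_of_nonpos hz] using this

theorem abs_le_of_hasDerivAt_linear {u a f : ℝ → ℝ} {K M z : ℝ}
    (hu : ∀ t, HasDerivAt u (a t * u t + f t) t) (ha : ∀ t, |a t| ≤ K)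
    (hf : ∀ t, |t| ≤ |z| → |f t| ≤ M) :
    |u z| ≤ (|u 0| + M * |z|) * exp (K * |z|) := by
  refine abs_le_of_abs_deriv_le hu ((abs_nonneg _).trans (ha 0))
    ((abs_nonneg _).trans (hf 0 (by simp))) le_rfl fun t ht => ?_
  calc |a t * u t + f t| ≤ |a t| * |u t| + |f t| := by
        rw [← abs_mul]; exact abs_add_le _ _
    _ ≤ K * |u t| + M := by gcongr <;> simp_all

variable {E : Type*} [NormedAddCommGroup E] [NormedSpace ℝ E]

noncomputable def partialFst (F : ℝ × ℝ → E) (p : ℝ × ℝ) : E := fderiv ℝ F p (1, 0)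

theorem ContDiff.partialFst {F : ℝ × ℝ → E} {m n : WithTop ℕ∞} (hF : ContDiff ℝ n F)
    (hmn : m + 1 ≤ n) : ContDiff ℝ m (partialFst F) :=
  (hF.fderiv_right hmn).clm_apply contDiff_const

theorem hasDerivAt_partialFst {F : ℝ × ℝ → E} (hF : Differentiable ℝ F) (y z : ℝ) :
    HasDerivAt (fun y' => F (y', z)) (partialFst F (y, z)) y :=
  (hF (y, z)).hasFDerivAt.comp_hasDerivAt y ((hasDerivAt_id y).prodMk (hasDerivAt_const y z))

theorem partialFst_eq {F : ℝ × ℝ → E} (hF : Differentiable ℝ F) {y z : ℝ} {v : E}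
    (h : HasDerivAt (fun y' => F (y', z)) v y) : partialFst F (y, z) = v :=
  (hasDerivAt_partialFst hF y z).unique h

theorem hasDerivAt_snd_section {F : ℝ × ℝ → E} (hF : Differentiable ℝ F) (y z : ℝ) :
    HasDerivAt (fun z' => F (y, z')) (fderiv ℝ F (y, z) (0, 1)) z :=
  (hF (y, z)).hasFDerivAt.comp_hasDerivAt z ((hasDerivAt_const z y).prodMk (hasDerivAt_id z))

theorem hasDerivAt_partialFst_snd {F Fz H : ℝ × ℝ → E} (hF : ContDiff ℝ 2 F)
    (hFz : ∀ y z, HasDerivAt (fun z' => F (y, z')) (Fz (y, z)) z)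
    (hH : ∀ y z, HasDerivAt (fun y' => Fz (y', z)) (H (y, z)) y) (y z : ℝ) :
    HasDerivAt (fun z' => partialFst F (y, z')) (H (y, z)) z := by
  have hF₁ : Differentiable ℝ F := hF.differentiable (by norm_num)
  have hDF : Differentiable ℝ (fderiv ℝ F) :=
    (hF.fderiv_right (m := 1) (by norm_num)).differentiable one_ne_zero
  have hFz_eq : Fz = fun q => fderiv ℝ F q (0, 1) :=
    funext fun q => (hFz q.1 q.2).unique (hasDerivAt_snd_section hF₁ q.1 q.2)
  have fderiv_apply (v w : ℝ × ℝ) :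
      fderiv ℝ (fun q => fderiv ℝ F q v) (y, z) w = fderiv ℝ (fderiv ℝ F) (y, z) w v := by
    rw [fderiv_clm_apply (hDF _) (differentiableAt_const v)]
    simp
  have hFz : Differentiable ℝ Fz := hFz_eq ▸ fun q => (hDF q).clm_apply (differentiableAt_const _)
  convert hasDerivAt_snd_section ((hF.partialFst (m := 1) (by norm_num)).differentiable
    one_ne_zero) y z using 1
  calc H (y, z) = partialFst Fz (y, z) := (partialFst_eq hFz (hH y z)).symm
    _ = fderiv ℝ (fderiv ℝ F) (y, z) (1, 0) (0, 1) := by rw [partialFst, hFz_eq, fderiv_apply]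
    _ = fderiv ℝ (fderiv ℝ F) (y, z) (0, 1) (1, 0) :=
      (hF.contDiffAt.isSymmSndFDerivAt (by simp)) _ _
    _ = fderiv ℝ (partialFst F) (y, z) (0, 1) := by rw [← fderiv_apply]; rfl

theorem iteratedDeriv_fst_section {F : ℝ × ℝ → E} {n : ℕ} (hF : ContDiff ℝ n F) (y z : ℝ) :
    iteratedDeriv n (fun y' => F (y', z)) y = partialFst^[n] F (y, z) := by
  induction n generalizing F with
  | zero => simp
  | succ n ih =>
    have hderiv : deriv (fun y' => F (y', z)) = fun y' => partialFst F (y', z) :=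
      funext fun y' => (hasDerivAt_partialFst (hF.differentiable (by simp)) y' z).deriv
    rw [iteratedDeriv_succ', hderiv, ih (hF.partialFst (by simp)), Function.iterate_succ_apply]

theorem ContDiff.hasDerivAt_iteratedDeriv {f : ℝ → ℝ} {n : WithTop ℕ∞} (k : ℕ)
    (hf : ContDiff ℝ n f) (hk : k < n) (x : ℝ) :
    HasDerivAt (iteratedDeriv k f) (iteratedDeriv (k + 1) f x) x := by
  rw [iteratedDeriv_succ]
  exact (hf.differentiable_iteratedDeriv k hk x).hasDerivAt

structure IsDossFlow_s6 (g : ℝ → ℝ) (α : ℝ × ℝ → ℝ) : Prop where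
  hasDerivAt_snd : ∀ y z, HasDerivAt (fun z' => α (y, z')) (g (α (y, z))) z
  map_zero : ∀ y, α (y, 0) = y

namespace IsDossFlow_s6

variable {g : ℝ → ℝ} {α : ℝ × ℝ → ℝ}

theorem hasDerivAt_partialFst (h : IsDossFlow_s6 g α) (hg : ContDiff ℝ 1 g) (hα : ContDiff ℝ 2 α)
    (y z : ℝ) :
    HasDerivAt (fun z' => partialFst α (y, z')) (deriv g (α (y, z)) * partialFst α (y, z)) z :=
  hasDerivAt_partialFst_snd (Fz := fun p => g (α p))
    (H := fun p => deriv g (α p) * partialFst α p) hα h.hasDerivAt_snd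
    (fun y z => (hg.differentiable one_ne_zero _).hasDerivAt.comp y
      (_root_.hasDerivAt_partialFst (hα.differentiable (by simp)) y z)) y z

theorem hasDerivAt_partialFst_two (h : IsDossFlow_s6 g α) (hg : ContDiff ℝ 2 g)
    (hα : ContDiff ℝ 3 α) (y z : ℝ) :
    HasDerivAt (fun z' => partialFst^[2] α (y, z'))
      (deriv g (α (y, z)) * partialFst^[2] α (y, z)
        + iteratedDeriv 2 g (α (y, z)) * partialFst α (y, z) ^ 2) z := by
  have hA₁ : ContDiff ℝ 2 (partialFst α) := hα.partialFst (by norm_num)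
  refine hasDerivAt_partialFst_snd (Fz := fun p => deriv g (α p) * partialFst α p)
    (H := fun p =>
      deriv g (α p) * partialFst^[2] α p + iteratedDeriv 2 g (α p) * partialFst α p ^ 2)
    hA₁ (h.hasDerivAt_partialFst (hg.of_le (by norm_num)) (hα.of_le (by norm_num)))
    (fun y z => ?_) y z
  have hg' := hg.hasDerivAt_iteratedDeriv 1 (by norm_num) (α (y, z))
  rw [iteratedDeriv_one] at hg'
  refine ((hg'.comp y (_root_.hasDerivAt_partialFst (hα.differentiable (by simp)) y z)).fun_mul
    (_root_.hasDerivAt_partialFst (hA₁.differentiable (by simp)) y z)).congr_deriv ?_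
  simp only [Function.comp_apply, Function.iterate_succ, Function.iterate_zero, Function.id_comp]
  ring

theorem hasDerivAt_partialFst_three (h : IsDossFlow_s6 g α) (hg : ContDiff ℝ 3 g)
    (hα : ContDiff ℝ 4 α) (y z : ℝ) :
    HasDerivAt (fun z' => partialFst^[3] α (y, z'))
      (deriv g (α (y, z)) * partialFst^[3] α (y, z)
        + (iteratedDeriv 3 g (α (y, z)) * partialFst α (y, z) ^ 3
          + 3 * iteratedDeriv 2 g (α (y, z)) * partialFst α (y, z) * partialFst^[2] α (y, z)))
      z := by
  have hA₁ : ContDiff ℝ 3 (partialFst α) := hα.partialFst (by norm_num)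
  have hA₂ : ContDiff ℝ 2 (partialFst^[2] α) := hA₁.partialFst (by norm_num)
  refine hasDerivAt_partialFst_snd
    (Fz := fun p =>
      deriv g (α p) * partialFst^[2] α p + iteratedDeriv 2 g (α p) * partialFst α p ^ 2)
    (H := fun p => deriv g (α p) * partialFst^[3] α p
      + (iteratedDeriv 3 g (α p) * partialFst α p ^ 3
        + 3 * iteratedDeriv 2 g (α p) * partialFst α p * partialFst^[2] α p))
    hA₂ (h.hasDerivAt_partialFst_two (hg.of_le (by norm_num)) (hα.of_le (by norm_num)))
    (fun y z => ?_) y z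
  have hg₁ := hg.hasDerivAt_iteratedDeriv 1 (by norm_num) (α (y, z))
  have hg₂ := hg.hasDerivAt_iteratedDeriv 2 (by norm_num) (α (y, z))
  rw [iteratedDeriv_one] at hg₁
  have hα₀ := _root_.hasDerivAt_partialFst (hα.differentiable (by simp)) y z
  have hα₁ := _root_.hasDerivAt_partialFst (hA₁.differentiable (by simp)) y z
  have hα₂ := _root_.hasDerivAt_partialFst (hA₂.differentiable (by simp)) y z
  refine (((hg₁.comp y hα₀).fun_mul hα₂).fun_add
    ((hg₂.comp y hα₀).fun_mul (hα₁.fun_pow 2))).congr_deriv ?_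
  simp only [Function.comp_apply, Function.iterate_succ, Function.iterate_zero, Function.id_comp]
  ring

theorem partialFst_map_zero (h : IsDossFlow_s6 g α) (hα : Differentiable ℝ α) (y : ℝ) :
    partialFst α (y, 0) = 1 :=
  partialFst_eq hα (by simp only [h.map_zero]; exact hasDerivAt_id' y)

theorem partialFst_two_map_zero (h : IsDossFlow_s6 g α) (hα : ContDiff ℝ 2 α) (y : ℝ) :
    partialFst^[2] α (y, 0) = 0 :=
  partialFst_eq ((hα.partialFst (m := 1) (by norm_num)).differentiable one_ne_zero) (by
    simp only [h.partialFst_map_zero (hα.differentiable (by simp))]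
    exact hasDerivAt_const y 1)

theorem partialFst_three_map_zero (h : IsDossFlow_s6 g α) (hα : ContDiff ℝ 3 α) (y : ℝ) :
    partialFst^[3] α (y, 0) = 0 := by
  have hA₂ : ContDiff ℝ 1 (partialFst^[2] α) :=
    (hα.partialFst (m := 2) (by norm_num)).partialFst (by norm_num)
  refine partialFst_eq (hA₂.differentiable one_ne_zero) ?_
  simp only [h.partialFst_two_map_zero (hα.of_le (by norm_num))]
  exact hasDerivAt_const y 0

variable {K L₂ L₃ : ℝ}

theorem abs_partialFst_le (h : IsDossFlow_s6 g α) (hg : ContDiff ℝ 1 g) (hα : ContDiff ℝ 2 α)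
    (hK : ∀ x, |deriv g x| ≤ K) (y z : ℝ) :
    |partialFst α (y, z)| ≤ exp (K * |z|) := by
  have := abs_le_of_hasDerivAt_linear (u := fun t => partialFst α (y, t)) (f := fun _ => 0)
    (M := 0) (z := z) (fun t => by simpa using h.hasDerivAt_partialFst hg hα y t) (fun t => hK _)
    (fun _ _ => by simp)
  simpa [h.partialFst_map_zero (hα.differentiable (by simp))] using this

theorem abs_partialFst_two_le (h : IsDossFlow_s6 g α) (hg : ContDiff ℝ 2 g) (hα : ContDiff ℝ 3 α)
    (hK : ∀ x, |deriv g x| ≤ K) (hL₂ : ∀ x, |iteratedDeriv 2 g x| ≤ L₂) (y z : ℝ) :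
    |partialFst^[2] α (y, z)| ≤ exp ((3 * K + L₂) * |z|) := by
  have hK₀ : 0 ≤ K := (abs_nonneg _).trans (hK 0)
  have hL₂₀ : 0 ≤ L₂ := (abs_nonneg _).trans (hL₂ 0)
  have hforce : ∀ t, |t| ≤ |z| →
      |iteratedDeriv 2 g (α (y, t)) * partialFst α (y, t) ^ 2| ≤ L₂ * exp (K * |z|) ^ 2 := by
    intro t ht
    have hA₁ : |partialFst α (y, t)| ≤ exp (K * |z|) :=
      (h.abs_partialFst_le (hg.of_le (by norm_num)) (hα.of_le (by norm_num)) hK y t).trans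
        (by gcongr)
    rw [abs_mul, abs_pow]
    gcongr
    exact hL₂ _
  have := abs_le_of_hasDerivAt_linear (u := fun t => partialFst^[2] α (y, t))
    (h.hasDerivAt_partialFst_two hg hα y) (fun t => hK _) hforce
  calc |partialFst^[2] α (y, z)|
      ≤ (|partialFst^[2] α (y, 0)| + L₂ * exp (K * |z|) ^ 2 * |z|) * exp (K * |z|) := this
    _ = L₂ * |z| * exp (3 * K * |z|) := by
      rw [h.partialFst_two_map_zero (hα.of_le (by norm_num)),
        show 3 * K * |z| = K * |z| + K * |z| + K * |z| by ring, exp_add, exp_add]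
      simp only [abs_zero]
      ring
    _ ≤ exp ((3 * K + L₂) * |z|) := by
      convert mul_exp_le_exp_add _ _ using 2
      ring

theorem abs_partialFst_three_le (h : IsDossFlow_s6 g α) (hg : ContDiff ℝ 3 g) (hα : ContDiff ℝ 4 α)
    (hK : ∀ x, |deriv g x| ≤ K) (hL₂ : ∀ x, |iteratedDeriv 2 g x| ≤ L₂)
    (hL₃ : ∀ x, |iteratedDeriv 3 g x| ≤ L₃) (y z : ℝ) :
    |partialFst^[3] α (y, z)| ≤ exp ((5 * K + 4 * L₂ + L₃) * |z|) := by
  have hK₀ : 0 ≤ K := (abs_nonneg _).trans (hK 0)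
  have hL₂₀ : 0 ≤ L₂ := (abs_nonneg _).trans (hL₂ 0)
  have hL₃₀ : 0 ≤ L₃ := (abs_nonneg _).trans (hL₃ 0)
  have hforce : ∀ t, |t| ≤ |z| →
      |iteratedDeriv 3 g (α (y, t)) * partialFst α (y, t) ^ 3
        + 3 * iteratedDeriv 2 g (α (y, t)) * partialFst α (y, t) * partialFst^[2] α (y, t)|
        ≤ (L₃ + 3 * L₂) * exp ((4 * K + L₂) * |z|) := by
    intro t ht
    have hA₁ : |partialFst α (y, t)| ≤ exp (K * |z|) :=
      (h.abs_partialFst_le (hg.of_le (by norm_num)) (hα.of_le (by norm_num)) hK y t).trans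
        (by gcongr)
    have hA₂ : |partialFst^[2] α (y, t)| ≤ exp ((3 * K + L₂) * |z|) :=
      (h.abs_partialFst_two_le (hg.of_le (by norm_num)) (hα.of_le (by norm_num)) hK hL₂ y t).trans
        (by gcongr)
    have hcube : exp (K * |z|) ^ 3 ≤ exp ((4 * K + L₂) * |z|) := by
      rw [← exp_nat_mul, exp_le_exp]; push_cast; nlinarith [abs_nonneg z]
    have hprod : exp (K * |z|) * exp ((3 * K + L₂) * |z|) = exp ((4 * K + L₂) * |z|) := by
      rw [← exp_add]; ring_nf
    calc _ ≤ |iteratedDeriv 3 g (α (y, t))| * |partialFst α (y, t)| ^ 3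
          + 3 * |iteratedDeriv 2 g (α (y, t))| * |partialFst α (y, t)|
            * |partialFst^[2] α (y, t)| := by
          refine (abs_add_le _ _).trans_eq ?_
          simp only [abs_mul, abs_pow, abs_of_pos (three_pos : (0 : ℝ) < 3)]
      _ ≤ L₃ * exp (K * |z|) ^ 3 + 3 * L₂ * exp (K * |z|) * exp ((3 * K + L₂) * |z|) := by
          gcongr
          exacts [hL₃ _, hL₂ _]
      _ ≤ (L₃ + 3 * L₂) * exp ((4 * K + L₂) * |z|) := by
          rw [mul_assoc (3 * L₂), hprod]
          nlinarith
  have := abs_le_of_hasDerivAt_linear (u := fun t => partialFst^[3] α (y, t))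
    (h.hasDerivAt_partialFst_three hg hα y) (fun t => hK _) hforce
  calc |partialFst^[3] α (y, z)|
      ≤ (|partialFst^[3] α (y, 0)| + (L₃ + 3 * L₂) * exp ((4 * K + L₂) * |z|) * |z|)
        * exp (K * |z|) := this
    _ = (L₃ + 3 * L₂) * |z| * exp ((5 * K + L₂) * |z|) := by
      rw [h.partialFst_three_map_zero (hα.of_le (by norm_num)), abs_zero, zero_add,
        mul_right_comm _ (exp _), mul_assoc _ (exp _), ← exp_add]
      ring_nf
    _ ≤ exp ((5 * K + 4 * L₂ + L₃) * |z|) := by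
      convert mul_exp_le_exp_add _ _ using 2
      ring

end IsDossFlow_s6

/-- If `g` is `C³` with `|g'| ≤ C₁`, `|g''| ≤ C₂`, `|g'''| ≤ C₃` and `α`
is `C⁴` and solves the Doss ODE `∂α/∂z (y,z) = g (α (y,z))`, `α (y,0) = y`, then there
is a constant `C > 0`, depending only on the bounds `C₁, C₂, C₃`, such that
`|∂³α/∂y³ (y,z)| ≤ exp (C|z|)`. -/
theorem stmt_6 (C₁ C₂ C₃ : ℝ) :
    ∃ C > 0, ∀ g : ℝ → ℝ, ContDiff ℝ 3 g →
      (∀ x : ℝ, |deriv g x| ≤ C₁) → (∀ x : ℝ, |iteratedDeriv 2 g x| ≤ C₂) →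
      (∀ x : ℝ, |iteratedDeriv 3 g x| ≤ C₃) →
      ∀ α : ℝ × ℝ → ℝ, ContDiff ℝ 4 α →
      (∀ y z : ℝ, HasDerivAt (fun z' => α (y, z')) (g (α (y, z))) z) →
      (∀ y : ℝ, α (y, 0) = y) →
      ∀ y z : ℝ, |iteratedDeriv 3 (fun y' => α (y', z)) y| ≤ Real.exp (C * |z|) := by
  refine ⟨5 * |C₁| + 4 * |C₂| + |C₃| + 1, by positivity, ?_⟩
  intro g hg hC₁ hC₂ hC₃ α hα hode hinit y z
  have hflow : IsDossFlow_s6 g α := ⟨hode, hinit⟩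
  rw [iteratedDeriv_fst_section (hα.of_le (by norm_num))]
  calc |partialFst^[3] α (y, z)|
      ≤ Real.exp ((5 * |C₁| + 4 * |C₂| + |C₃|) * |z|) :=
        hflow.abs_partialFst_three_le hg hα (fun x => (hC₁ x).trans (le_abs_self _))
          (fun x => (hC₂ x).trans (le_abs_self _)) (fun x => (hC₃ x).trans (le_abs_self _)) y z
    _ ≤ Real.exp ((5 * |C₁| + 4 * |C₂| + |C₃| + 1) * |z|) :=
      Real.exp_le_exp.2 (mul_le_mul_of_nonneg_right (by linarith) (abs_nonneg z))
end

section
/- Let g : ℝ → ℝ be continuously differentiable with |g(x)| ≤ M and |g′(x)| ≤ C for all x ∈ ℝ, and let α : ℝ × ℝ → ℝ be twice continuously differentiable (jointly in (y,z)) and satisfy the Doss ODE ∂α/∂z(y,z) = g(α(y,z)) for all (y,z) ∈ ℝ × ℝ, with initial condition α(y,0) = y for all y ∈ ℝ. Suppose h : ℝ × ℝ → ℝ is differentiable and satisfies α(h(y,z),z) = y for all (y,z) ∈ ℝ × ℝ. Then for all (y,z) ∈ ℝ × ℝ: (i) |h(y,z)| ≤ |y| + M·|z|, and (ii) exp(−C|z|)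 ≤ ∂h/∂y(y,z) ≤ exp(C|z|). -/
open Real

/-! Part (i) is the mean value inequality for `z ↦ α (x, z)`, whose speed is bounded by `M`,
taken at `x = h (y, z)`. For part (ii), differentiating the Doss ODE in `y` (the mixed partials
of the `C²` map `α` commute) shows that `u z = ∂α/∂y (x, z)` solves the linear equation
`u' = g' (α (x, ·)) * u` with `u 0 = 1`, so `u z = exp (∫₀^z g' (α (x, s)) ds)` lies between
`exp (-C|z|)` and `exp (C|z|)`; differentiating `α (h (y, z), z) = y` in `y` gives
`∂h/∂y (y, z) = 1 / u z` with `x = h (y, z)`. -/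

theorem exists_eq_exp_of_hasDerivAt_eq_mul {u c : ℝ → ℝ} {C : ℝ} (hc : Continuous c)
    (hcC : ∀ t, |c t| ≤ C) (hu : ∀ t, HasDerivAt u (c t * u t) t) (hu0 : u 0 = 1) (t : ℝ) :
    ∃ F, u t = exp F ∧ |F| ≤ C * |t| := by
  set F : ℝ → ℝ := fun s => ∫ r in (0 : ℝ)..s, c r
  have hF : ∀ s, HasDerivAt F (c s) s := fun s => (hc.integral_hasStrictDerivAt 0 s).hasDerivAt
  have hconst : ∀ s, u s * exp (-F s) = 1 := by
    have hderiv : ∀ s, HasDerivAt (fun s => u s * exp (-F s)) 0 s := fun s =>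
      ((hu s).mul (hF s).neg.exp).congr_deriv (by simp only [Pi.neg_apply]; ring)
    intro s
    rw [is_const_of_deriv_eq_zero (fun s => (hderiv s).differentiableAt)
      (fun s => (hderiv s).deriv) s 0]
    simp [F, hu0]
  refine ⟨F t, ?_, ?_⟩
  · simpa [exp_neg, mul_inv_eq_one₀ (exp_ne_zero _)] using hconst t
  · have := intervalIntegral.norm_integral_le_of_norm_le_const (f := c) (a := 0) (b := t)
      fun s _ => hcC s
    rwa [Real.norm_eq_abs, sub_zero] at this

section DossFlow

variable {g : ℝ → ℝ} {α : ℝ × ℝ → ℝ}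

theorem abs_flow_sub_le {M : ℝ} (hgM : ∀ x, |g x| ≤ M)
    (hode : ∀ y z : ℝ, HasDerivAt (fun z' => α (y, z')) (g (α (y, z))) z)
    (hinit : ∀ y : ℝ, α (y, 0) = y) (x z : ℝ) :
    |α (x, z) - x| ≤ M * |z| := by
  have := Convex.norm_image_sub_le_of_norm_hasDerivWithin_le
    (fun t _ => (hode x t).hasDerivWithinAt) (fun t _ => hgM (α (x, t))) convex_univ
    (Set.mem_univ 0) (Set.mem_univ z)
  simpa [hinit] using this

theorem fderiv_apply_zero_one_eq (hα : Differentiable ℝ α)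
    (hode : ∀ y z : ℝ, HasDerivAt (fun z' => α (y, z')) (g (α (y, z))) z) (p : ℝ × ℝ) :
    fderiv ℝ α p (0, 1) = g (α p) := by
  have hcurve : HasDerivAt (fun z' => (p.1, z')) ((0 : ℝ), (1 : ℝ)) p.2 :=
    (hasDerivAt_const p.2 p.1).prodMk (hasDerivAt_id p.2)
  exact ((hα p).hasFDerivAt.comp_hasDerivAt p.2 hcurve).unique (hode p.1 p.2)

theorem fderiv_apply_one_zero_of_snd_eq_zero (hα : Differentiable ℝ α)
    (hinit : ∀ y : ℝ, α (y, 0) = y) (x : ℝ) :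
    fderiv ℝ α (x, 0) (1, 0) = 1 := by
  have hcurve : HasDerivAt (fun y' => (y', (0 : ℝ))) ((1 : ℝ), (0 : ℝ)) x :=
    (hasDerivAt_id x).prodMk (hasDerivAt_const x 0)
  have := (hα (x, 0)).hasFDerivAt.comp_hasDerivAt x hcurve
  simp only [Function.comp_def, hinit] at this
  exact this.unique (hasDerivAt_id x)

theorem hasDerivAt_fderiv_apply_one_zero (hg : Differentiable ℝ g) (hα : ContDiff ℝ 2 α)
    (hode : ∀ y z : ℝ, HasDerivAt (fun z' => α (y, z')) (g (α (y, z))) z) (x t : ℝ) :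
    HasDerivAt (fun t' => fderiv ℝ α (x, t') (1, 0))
      (deriv g (α (x, t)) * fderiv ℝ α (x, t) (1, 0)) t := by
  set D := fderiv ℝ α
  have hαd : Differentiable ℝ α := hα.differentiable (by norm_num)
  have hDd : Differentiable ℝ D := (hα.fderiv_right (by norm_num)).differentiable one_ne_zero
  have hcurve : HasDerivAt (fun t' => (x, t')) ((0 : ℝ), (1 : ℝ)) t :=
    (hasDerivAt_const t x).prodMk (hasDerivAt_id t)
  have hmixed : HasDerivAt (fun t' => D (x, t') (1, 0)) (fderiv ℝ D (x, t) (0, 1) (1, 0)) t :=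
    ((ContinuousLinearMap.apply ℝ ℝ ((1 : ℝ), (0 : ℝ))).hasFDerivAt.comp_hasDerivAt t
      ((hDd (x, t)).hasFDerivAt.comp_hasDerivAt t hcurve))
  have hsymm : fderiv ℝ D (x, t) (0, 1) (1, 0) = fderiv ℝ D (x, t) (1, 0) (0, 1) :=
    second_derivative_symmetric (fun p => (hαd p).hasFDerivAt) (hDd (x, t)).hasFDerivAt _ _
  -- differentiate the identity `D q (0, 1) = g (α q)` in `q`
  set evalSnd := ContinuousLinearMap.apply ℝ ℝ ((0 : ℝ), (1 : ℝ))
  have hz : HasFDerivAt (fun q => D q (0, 1)) (evalSnd.comp (fderiv ℝ D (x, t))) (x, t) :=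
    evalSnd.hasFDerivAt.comp (x, t) (hDd (x, t)).hasFDerivAt
  rw [funext (fderiv_apply_zero_one_eq hαd hode)] at hz
  have hgα := (hg (α (x, t))).hasDerivAt.comp_hasFDerivAt (x, t) (hαd (x, t)).hasFDerivAt
  have := congrArg (· (1, 0)) (hz.unique hgα)
  simp only [evalSnd, ContinuousLinearMap.comp_apply, ContinuousLinearMap.apply_apply,
    smul_apply, smul_eq_mul] at this
  rwa [hsymm, this] at hmixed

theorem exists_fderiv_apply_one_zero_eq_exp {C : ℝ} (hg : ContDiff ℝ 1 g)
    (hgC : ∀ x, |deriv g x| ≤ C) (hα : ContDiff ℝ 2 α)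
    (hode : ∀ y z : ℝ, HasDerivAt (fun z' => α (y, z')) (g (α (y, z))) z)
    (hinit : ∀ y : ℝ, α (y, 0) = y) (x z : ℝ) :
    ∃ F, fderiv ℝ α (x, z) (1, 0) = exp F ∧ |F| ≤ C * |z| :=
  exists_eq_exp_of_hasDerivAt_eq_mul
    ((hg.continuous_deriv le_rfl).comp (hα.continuous.comp (by fun_prop)))
    (fun t => hgC _)
    (hasDerivAt_fderiv_apply_one_zero (hg.differentiable one_ne_zero) hα hode x)
    (fderiv_apply_one_zero_of_snd_eq_zero (hα.differentiable (by norm_num)) hinit x) z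

theorem deriv_mul_fderiv_apply_one_zero_eq_one {h : ℝ × ℝ → ℝ} (hα : Differentiable ℝ α)
    (hh : Differentiable ℝ h) (hinv : ∀ y z : ℝ, α (h (y, z), z) = y) (y z : ℝ) :
    deriv (fun y' => h (y', z)) y * fderiv ℝ α (h (y, z), z) (1, 0) = 1 := by
  set d := deriv (fun y' => h (y', z)) y
  have hcurve : HasDerivAt (fun y' => (h (y', z), z)) (d, (0 : ℝ)) y :=
    ((hh.comp (by fun_prop : Differentiable ℝ fun y' : ℝ => (y', z))) y).hasDerivAt.prodMk
      (hasDerivAt_const y z)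
  have hcomp := (hα (h (y, z), z)).hasFDerivAt.comp_hasDerivAt y hcurve
  simp only [Function.comp_def, hinv] at hcomp
  have hd : ((d : ℝ), (0 : ℝ)) = d • ((1 : ℝ), (0 : ℝ)) := by simp
  rw [hd, map_smul, smul_eq_mul] at hcomp
  exact hcomp.unique (hasDerivAt_id y)

end DossFlow

/-- If `g` is `C¹` with `|g| ≤ M` and `|g'| ≤ C`, `α` is `C²` and
solves the Doss ODE `∂α/∂z (y,z) = g (α (y,z))`, `α (y,0) = y`, and `h` is a
differentiable `y`-inverse of `α`, i.e. `α (h (y,z), z) = y`, then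
`|h (y,z)| ≤ |y| + M|z|` and `exp (-C|z|) ≤ ∂h/∂y (y,z) ≤ exp (C|z|)`. -/
theorem stmt_9 (g : ℝ → ℝ) (hg : ContDiff ℝ 1 g) (M C : ℝ)
    (hgM : ∀ x : ℝ, |g x| ≤ M) (hgC : ∀ x : ℝ, |deriv g x| ≤ C)
    (α : ℝ × ℝ → ℝ) (hα : ContDiff ℝ 2 α)
    (hode : ∀ y z : ℝ, HasDerivAt (fun z' => α (y, z')) (g (α (y, z))) z)
    (hinit : ∀ y : ℝ, α (y, 0) = y)
    (h : ℝ × ℝ → ℝ) (hh : Differentiable ℝ h)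
    (hinv : ∀ y z : ℝ, α (h (y, z), z) = y) (y z : ℝ) :
    |h (y, z)| ≤ |y| + M * |z| ∧
      Real.exp (-(C * |z|)) ≤ deriv (fun y' => h (y', z)) y ∧
      deriv (fun y' => h (y', z)) y ≤ Real.exp (C * |z|) := by
  have hdisp := abs_flow_sub_le hgM hode hinit (h (y, z)) z
  rw [hinv, abs_sub_comm] at hdisp
  obtain ⟨F, hFeq, hF⟩ := exists_fderiv_apply_one_zero_eq_exp hg hgC hα hode hinit (h (y, z)) z
  have hinvd :=
    deriv_mul_fderiv_apply_one_zero_eq_one (hα.differentiable (by norm_num)) hh hinv y z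
  rw [hFeq, ← eq_mul_inv_iff_mul_eq₀ (exp_ne_zero F), one_mul, ← exp_neg] at hinvd
  rw [hinvd]
  obtain ⟨hFl, hFu⟩ := abs_le.mp hF
  exact ⟨by linarith [abs_sub_abs_le_abs_sub (h (y, z)) y], exp_le_exp.mpr (by linarith),
    exp_le_exp.mpr (by linarith)⟩
end

section
/- Let a, b > 0 with a + b > 1, let T > 0, and let x, y : ℝ → ℝ be Hölder continuous with exponents a and b respectively. For ε > 0 set C_ε(x,y)(t) = (1/ε)·∫₀ᵗ (x(s) − x(s−ε))·(y(s) − y(s−ε)) ds. Then sup_{t∈[0,T]} |C_ε(x,y)(t)| → 0 as ε → 0⁺. -/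
/-!
Each increment of `x` (resp. `y`) over a step of length `ε` is `O(ε ^ a)` (resp. `O(ε ^ b)`),
so the integrand of `C_ε(x, y)(t)` is `O(ε ^ (a + b))` and `|C_ε(x, y)(t)| ≤ Kx Ky |t| ε ^ (a + b - 1)`.
Since `a + b > 1`, this bound tends to `0`, uniformly for `t ∈ [0, T]`.
-/

open Filter Topology

theorem tendstoUniformlyOn_zero_of_norm_le {ι α E : Type*} [SeminormedAddCommGroup E]
    {F : ι → α → E} {g : ι → ℝ} {l : Filter ι} {s : Set α} (hg : Tendsto g l (𝓝 0))
    (hF : ∀ᶠ i in l, ∀ t ∈ s, ‖F i t‖ ≤ g i) : TendstoUniformlyOn F 0 l s := by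
  rw [SeminormedAddGroup.tendstoUniformlyOn_zero]
  intro δ hδ
  filter_upwards [hF, hg.eventually (gt_mem_nhds hδ)] with i hFi hgi t ht
  exact (hFi t ht).trans_lt hgi

noncomputable def approxCovariation (x y : ℝ → ℝ) (ε t : ℝ) : ℝ :=
  ε⁻¹ * ∫ s in (0:ℝ)..t, (x s - x (s - ε)) * (y s - y (s - ε))

section Holder

variable {x y : ℝ → ℝ} {a b Kx Ky : ℝ}

theorem holder_const_nonneg (hx : ∀ s t : ℝ, |x s - x t| ≤ Kx * |s - t| ^ a) : 0 ≤ Kx := by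
  simpa using (abs_nonneg _).trans (hx 1 0)

theorem abs_sub_shift_le (hx : ∀ s t : ℝ, |x s - x t| ≤ Kx * |s - t| ^ a) {ε : ℝ} (hε : 0 ≤ ε)
    (s : ℝ) : |x s - x (s - ε)| ≤ Kx * ε ^ a := by
  simpa [abs_of_nonneg hε] using hx s (s - ε)

theorem abs_mul_sub_shift_le (hx : ∀ s t : ℝ, |x s - x t| ≤ Kx * |s - t| ^ a)
    (hy : ∀ s t : ℝ, |y s - y t| ≤ Ky * |s - t| ^ b) {ε : ℝ} (hε : 0 < ε) (s : ℝ) :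
    |(x s - x (s - ε)) * (y s - y (s - ε))| ≤ Kx * Ky * ε ^ (a + b) := by
  have hxs := abs_sub_shift_le hx hε.le s
  calc |(x s - x (s - ε)) * (y s - y (s - ε))|
      = |x s - x (s - ε)| * |y s - y (s - ε)| := abs_mul _ _
    _ ≤ (Kx * ε ^ a) * (Ky * ε ^ b) :=
        mul_le_mul hxs (abs_sub_shift_le hy hε.le s) (abs_nonneg _) ((abs_nonneg _).trans hxs)
    _ = Kx * Ky * ε ^ (a + b) := by rw [Real.rpow_add hε]; ring

theorem abs_approxCovariation_le (hx : ∀ s t : ℝ, |x s - x t| ≤ Kx * |s - t| ^ a)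
    (hy : ∀ s t : ℝ, |y s - y t| ≤ Ky * |s - t| ^ b) {ε : ℝ} (hε : 0 < ε) (t : ℝ) :
    |approxCovariation x y ε t| ≤ Kx * Ky * |t| * ε ^ (a + b - 1) := by
  have hint : |∫ s in (0:ℝ)..t, (x s - x (s - ε)) * (y s - y (s - ε))|
      ≤ Kx * Ky * ε ^ (a + b) * |t| := by
    simpa only [Real.norm_eq_abs, sub_zero] using intervalIntegral.norm_integral_le_of_norm_le_const
      (a := 0) (b := t) (f := fun s => (x s - x (s - ε)) * (y s - y (s - ε)))
      fun s _ => abs_mul_sub_shift_le hx hy hε s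
  rw [approxCovariation, abs_mul, abs_inv, abs_of_pos hε]
  calc ε⁻¹ * |∫ s in (0:ℝ)..t, (x s - x (s - ε)) * (y s - y (s - ε))|
      ≤ ε⁻¹ * (Kx * Ky * ε ^ (a + b) * |t|) := by gcongr
    _ = Kx * Ky * |t| * ε ^ (a + b - 1) := by
        rw [Real.rpow_sub hε, Real.rpow_one]
        field_simp

end Holder

theorem stmt_11_general (a b T : ℝ) (hab : 1 < a + b)
    (x y : ℝ → ℝ) (Kx Ky : ℝ)
    (hx : ∀ s t : ℝ, |x s - x t| ≤ Kx * |s - t| ^ a)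
    (hy : ∀ s t : ℝ, |y s - y t| ≤ Ky * |s - t| ^ b) :
    TendstoUniformlyOn
      (fun ε t => ε⁻¹ * ∫ s in (0:ℝ)..t, (x s - x (s - ε)) * (y s - y (s - ε)))
      0 (nhdsWithin 0 (Set.Ioi 0)) (Set.Icc 0 T) := by
  have hrate : Tendsto (fun ε : ℝ => Kx * Ky * T * ε ^ (a + b - 1)) (𝓝[>] 0) (𝓝 0) := by
    simpa using ((tendsto_id.mono_left nhdsWithin_le_nhds).rpow_const_nhds_zero
      (sub_pos.2 hab)).const_mul (Kx * Ky * T)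
  refine tendstoUniformlyOn_zero_of_norm_le (F := approxCovariation x y) hrate ?_
  filter_upwards [self_mem_nhdsWithin] with ε (hε : 0 < ε) t ⟨ht0, htT⟩
  have hK : 0 ≤ Kx * Ky := mul_nonneg (holder_const_nonneg hx) (holder_const_nonneg hy)
  calc ‖approxCovariation x y ε t‖ ≤ Kx * Ky * |t| * ε ^ (a + b - 1) :=
        abs_approxCovariation_le hx hy hε t
    _ ≤ Kx * Ky * T * ε ^ (a + b - 1) := by rw [abs_of_nonneg ht0]; gcongr

/-- If `x` is `a`-Hölder continuous, `y` is `b`-Hölder continuous,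
with `a, b > 0` and `a + b > 1`, then
`C_ε(x,y)(t) = ε⁻¹ ∫₀ᵗ (x s - x (s-ε)) (y s - y (s-ε)) ds` converges to `0`
uniformly on `[0,T]` as `ε → 0⁺`. -/
theorem stmt_11 (a b T : ℝ) (ha : 0 < a) (hb : 0 < b) (hab : 1 < a + b) (hT : 0 < T)
    (x y : ℝ → ℝ) (Kx Ky : ℝ)
    (hx : ∀ s t : ℝ, |x s - x t| ≤ Kx * |s - t| ^ a)
    (hy : ∀ s t : ℝ, |y s - y t| ≤ Ky * |s - t| ^ b) :
    TendstoUniformlyOn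
      (fun ε t => ε⁻¹ * ∫ s in (0:ℝ)..t, (x s - x (s - ε)) * (y s - y (s - ε)))
      0 (nhdsWithin 0 (Set.Ioi 0)) (Set.Icc 0 T) :=
  stmt_11_general a b T hab x y Kx Ky hx hy
end

section
/- Let T > 0 and let x, y : ℝ → ℝ be continuous. For ε > 0 set C_ε(x,y)(t) = (1/ε)·∫₀ᵗ (x(s) − x(s−ε))·(y(s) − y(s−ε)) ds. Then: (i) for all ε > 0 and all t ∈ [0,T], |C_ε(x,y)(t)| ≤ (C_ε(x,x)(T))^{1/2} · (C_ε(y,y)(T))^{1/2}; (ii) if there is M > 0 with C_ε(x,x)(T) ≤ M for all ε ∈ (0,1], and C_ε(y,y)(T) → 0 as ε → 0⁺, then sup_{t∈[0,T]} |C_ε(x,y)(t)| → 0 as ε → 0⁺. -/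
/-!
Cauchy–Schwarz on `[0, t]` bounds `|C_ε(x,y)(t)|` by `√(C_ε(x,x)(t)) √(C_ε(y,y)(t))`, and
`C_ε(x,x)(t)` is nondecreasing in `t` because its integrand is a square. Under the hypotheses
of (ii) this bound is at most `√M √(C_ε(y,y)(T)) → 0`, uniformly in `t ∈ [0, T]`.
-/

/-- The approximate covariation `C_ε(x,y)(t) = ε⁻¹ ∫₀ᵗ (x s - x (s-ε)) (y s - y (s-ε)) ds`
of Russo and Vallois. -/
noncomputable def quadCov (x y : ℝ → ℝ) (ε t : ℝ) : ℝ :=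
  ε⁻¹ * ∫ s in (0:ℝ)..t, (x s - x (s - ε)) * (y s - y (s - ε))

open MeasureTheory Set Filter Topology

theorem abs_integral_mul_le_sqrt_mul_sqrt {α : Type*} [MeasurableSpace α] {μ : Measure α}
    {f g : α → ℝ} (hf : MemLp f 2 μ) (hg : MemLp g 2 μ) :
    |∫ a, f a * g a ∂μ| ≤ √(∫ a, f a ^ 2 ∂μ) * √(∫ a, g a ^ 2 ∂μ) := by
  have h2 : ENNReal.ofReal 2 = 2 := by norm_num
  have hsq : ∀ h : α → ℝ, ∫ a, ‖h a‖ ^ (2 : ℝ) ∂μ = ∫ a, h a ^ 2 ∂μ := fun h => by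
    simp only [Real.rpow_two, Real.norm_eq_abs, sq_abs]
  calc |∫ a, f a * g a ∂μ| ≤ ∫ a, ‖f a‖ * ‖g a‖ ∂μ := by
        simpa only [Real.norm_eq_abs, abs_mul] using
          norm_integral_le_integral_norm (fun a => f a * g a)
    _ ≤ (∫ a, ‖f a‖ ^ (2 : ℝ) ∂μ) ^ (1 / 2 : ℝ) * (∫ a, ‖g a‖ ^ (2 : ℝ) ∂μ) ^ (1 / 2 : ℝ) :=
        integral_mul_norm_le_Lp_mul_Lq Real.HolderConjugate.two_two (h2 ▸ hf) (h2 ▸ hg)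
    _ = √(∫ a, f a ^ 2 ∂μ) * √(∫ a, g a ^ 2 ∂μ) := by
        rw [hsq, hsq, Real.sqrt_eq_rpow, Real.sqrt_eq_rpow]

theorem abs_intervalIntegral_mul_le_sqrt_mul_sqrt {f g : ℝ → ℝ} (hf : Continuous f)
    (hg : Continuous g) {a b : ℝ} (hab : a ≤ b) :
    |∫ s in a..b, f s * g s| ≤ √(∫ s in a..b, f s ^ 2) * √(∫ s in a..b, g s ^ 2) := by
  have memLp_two : ∀ h : ℝ → ℝ, Continuous h → MemLp h 2 (volume.restrict (Ioc a b)) :=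
    fun h hh => (memLp_two_iff_integrable_sq hh.aestronglyMeasurable).2
      ((hh.pow 2).integrableOn_Ioc)
  simp only [intervalIntegral.integral_of_le hab]
  exact abs_integral_mul_le_sqrt_mul_sqrt (memLp_two f hf) (memLp_two g hg)

section quadCov

variable {x y : ℝ → ℝ} {ε t T : ℝ}

theorem quadCov_self (x : ℝ → ℝ) (ε t : ℝ) :
    quadCov x x ε t = ε⁻¹ * ∫ s in (0:ℝ)..t, (x s - x (s - ε)) ^ 2 := by
  simp only [quadCov, sq]

theorem Continuous.sub_shift (hx : Continuous x) (ε : ℝ) : Continuous fun s => x s - x (s - ε) :=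
  hx.sub (hx.comp (continuous_sub_right ε))

theorem quadCov_self_mono (hx : Continuous x) (hε : 0 ≤ ε) (ht : 0 ≤ t) (htT : t ≤ T) :
    quadCov x x ε t ≤ quadCov x x ε T := by
  rw [quadCov_self, quadCov_self]
  gcongr
  exact intervalIntegral.integral_mono_interval le_rfl ht htT
    (Eventually.of_forall fun s => sq_nonneg _) (((hx.sub_shift ε).pow 2).intervalIntegrable 0 T)

theorem abs_quadCov_le (hx : Continuous x) (hy : Continuous y) (hε : 0 ≤ ε) (ht : 0 ≤ t) :
    |quadCov x y ε t| ≤ √(quadCov x x ε t) * √(quadCov y y ε t) := by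
  have hε' : 0 ≤ ε⁻¹ := inv_nonneg.2 hε
  calc |quadCov x y ε t|
      = ε⁻¹ * |∫ s in (0:ℝ)..t, (x s - x (s - ε)) * (y s - y (s - ε))| := by
        rw [quadCov, abs_mul, abs_of_nonneg hε']
    _ ≤ ε⁻¹ * (√(∫ s in (0:ℝ)..t, (x s - x (s - ε)) ^ 2) *
          √(∫ s in (0:ℝ)..t, (y s - y (s - ε)) ^ 2)) := by
        gcongr
        exact abs_intervalIntegral_mul_le_sqrt_mul_sqrt (hx.sub_shift ε) (hy.sub_shift ε) ht
    _ = √(quadCov x x ε t) * √(quadCov y y ε t) := by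
        rw [quadCov_self, quadCov_self, Real.sqrt_mul hε', Real.sqrt_mul hε', mul_mul_mul_comm,
          Real.mul_self_sqrt hε']

theorem abs_quadCov_le_of_mem_Icc (hx : Continuous x) (hy : Continuous y) (hε : 0 ≤ ε)
    (ht : t ∈ Icc 0 T) : |quadCov x y ε t| ≤ √(quadCov x x ε T) * √(quadCov y y ε T) :=
  (abs_quadCov_le hx hy hε ht.1).trans <| by
    gcongr
    · exact quadCov_self_mono hx hε ht.1 ht.2
    · exact quadCov_self_mono hy hε ht.1 ht.2

end quadCov

theorem tendstoUniformlyOn_zero_of_abs_le {ι α : Type*} {l : Filter ι} {F : ι → α → ℝ}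
    {s : Set α} {b : ι → ℝ} (hb : Tendsto b l (𝓝 0)) (hF : ∀ᶠ i in l, ∀ a ∈ s, |F i a| ≤ b i) :
    TendstoUniformlyOn F 0 l s := by
  rw [Metric.tendstoUniformlyOn_iff]
  intro δ hδ
  filter_upwards [hF, hb.eventually_lt_const hδ] with i hFi hbi a ha
  simpa [Real.dist_eq] using (hFi a ha).trans_lt hbi

theorem stmt_12_general (T : ℝ) (x y : ℝ → ℝ)
    (hx : Continuous x) (hy : Continuous y) :
    (∀ ε > (0:ℝ), ∀ t ∈ Set.Icc (0:ℝ) T,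
      |quadCov x y ε t| ≤ Real.sqrt (quadCov x x ε T) * Real.sqrt (quadCov y y ε T)) ∧
    (∀ M > (0:ℝ), (∀ ε ∈ Set.Ioc (0:ℝ) 1, quadCov x x ε T ≤ M) →
      Filter.Tendsto (fun ε => quadCov y y ε T) (nhdsWithin 0 (Set.Ioi 0)) (nhds 0) →
      TendstoUniformlyOn (fun ε t => quadCov x y ε t) 0
        (nhdsWithin 0 (Set.Ioi 0)) (Set.Icc 0 T)) := by
  refine ⟨fun ε hε t ht => abs_quadCov_le_of_mem_Icc hx hy hε.le ht, fun M _ hxx hyy => ?_⟩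
  have hbound : Tendsto (fun ε => √M * √(quadCov y y ε T)) (𝓝[>] 0) (𝓝 0) := by
    simpa using (hyy.sqrt).const_mul √M
  refine tendstoUniformlyOn_zero_of_abs_le hbound ?_
  filter_upwards [Ioc_mem_nhdsGT zero_lt_one] with ε hε t ht
  calc |quadCov x y ε t| ≤ √(quadCov x x ε T) * √(quadCov y y ε T) :=
        abs_quadCov_le_of_mem_Icc hx hy hε.1.le ht
    _ ≤ √M * √(quadCov y y ε T) := by gcongr; exact hxx ε hε

/-- For continuous `x, y : ℝ → ℝ`:
(i) `|C_ε(x,y)(t)| ≤ √(C_ε(x,x)(T)) √(C_ε(y,y)(T))` for `ε > 0` and `t ∈ [0,T]`;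
(ii) if `C_ε(x,x)(T)` is bounded for `ε ∈ (0,1]` and `C_ε(y,y)(T) → 0` as `ε → 0⁺`,
then `C_ε(x,y)` converges to `0` uniformly on `[0,T]` as `ε → 0⁺`. -/
theorem stmt_12 (T : ℝ) (hT : 0 < T) (x y : ℝ → ℝ)
    (hx : Continuous x) (hy : Continuous y) :
    (∀ ε > (0:ℝ), ∀ t ∈ Set.Icc (0:ℝ) T,
      |quadCov x y ε t| ≤ Real.sqrt (quadCov x x ε T) * Real.sqrt (quadCov y y ε T)) ∧
    (∀ M > (0:ℝ), (∀ ε ∈ Set.Ioc (0:ℝ) 1, quadCov x x ε T ≤ M) →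
      Filter.Tendsto (fun ε => quadCov y y ε T) (nhdsWithin 0 (Set.Ioi 0)) (nhds 0) →
      TendstoUniformlyOn (fun ε t => quadCov x y ε t) 0
        (nhdsWithin 0 (Set.Ioi 0)) (Set.Icc 0 T)) :=
  stmt_12_general T x y hx hy
end

section
/- Let T > 0, let x : ℝ → ℝ be continuous, and let q : ℝ → ℝ be a nondecreasing continuous function with q(0) = 0 such that sup_{t∈[0,T]} | (1/ε)·∫₀ᵗ (x(s) − x(s−ε))² ds − q(t) | → 0 as ε → 0⁺. Let f : ℝ → ℝ be twice continuously differentiable. Then sup_{t∈[0,T]} | (1/ε)·∫₀ᵗ f′(x(s))·(x(s) − x(s−ε)) ds − ( f(x(t)) − f(x(0)) + (1/2)·∫_{(0,t]} f″(x(s)) dq(s) ) | → 0 as ε → 0⁺, where ∫_{(0,t]} · dq denotes the Lebesgue–Stieltjes integral with respect to q. In particular, the backward Russo–Vallois integral ∫₀ᵗ f′(x(s)) dx(s) exists and equals f(x(t)) − f(x(0)) + (1/2)∫_{(0,t]} f″(x(s)) dq(s). -/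
/-!
Taylor's formula at order two splits `f' (x s) (x s - x (s - ε))` into the increment
`f (x s) - f (x (s - ε))`, the term `½ f'' (x s) (x s - x (s - ε))²` and a remainder which is
`o((x s - x (s - ε))²)` uniformly in `s`, by uniform continuity of `x` and `f''` on compacts.
After division by `ε` the increments telescope into backward averages of `f ∘ x`, which tend to
`f (x t) - f (x 0)`; the remainders vanish in the limit because `ε⁻¹ ∫ (x s - x (s - ε))²` stays
bounded. Finally the densities `ε⁻¹ (x s - x (s - ε))²` have distribution functions converging
uniformly to `q`; comparing Riemann sums on a mesh adapted to the modulus of continuity of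
`f'' ∘ x` turns this into convergence of `∫ ½ f'' (x s) ε⁻¹ (x s - x (s - ε))² ds` to the
Stieltjes integral `½ ∫ f'' (x s) dq s`.
-/

open MeasureTheory

/- The Lebesgue–Stieltjes integral `∫_{(0,t]} h dq` of `h` with respect to a
nondecreasing (right-)continuous function `q`, with junk value `0` otherwise. -/
open Classical in
noncomputable def lsIntegral (q h : ℝ → ℝ) (t : ℝ) : ℝ :=
  if hq : Monotone q ∧ ∀ x : ℝ, ContinuousWithinAt q (Set.Ici x) x then
    ∫ s in Set.Ioc (0:ℝ) t, h s ∂(StieltjesFunction.mk q hq.1 hq.2).measure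
  else 0

open Set Filter Topology

noncomputable def secondOrderRemainder (f : ℝ → ℝ) (a b : ℝ) : ℝ :=
  f b - f a - deriv f a * (b - a) - 1 / 2 * deriv (deriv f) a * (b - a) ^ 2

theorem abs_secondOrderRemainder_le {f : ℝ → ℝ} (hf : Differentiable ℝ f)
    (hf' : Differentiable ℝ (deriv f)) {a b δ : ℝ}
    (hδ : ∀ v ∈ uIcc a b, |deriv (deriv f) v - deriv (deriv f) a| ≤ δ) :
    |secondOrderRemainder f a b| ≤ δ * (b - a) ^ 2 := by
  set f'' := deriv (deriv f)
  have hderiv_bound : ∀ u ∈ uIcc a b,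
      |deriv f u - deriv f a - f'' a * (u - a)| ≤ δ * |b - a| := by
    intro u hu
    have hmvt := convex_uIcc a b |>.norm_image_sub_le_of_norm_hasDerivWithin_le
      (f := fun v => deriv f v - f'' a * v) (f' := fun v => f'' v - f'' a)
      (fun v _ => ((hf' v).hasDerivAt.sub ((hasDerivAt_id v).const_mul _)).hasDerivWithinAt
        |>.congr_deriv (by simp [f''])) hδ left_mem_uIcc hu
    simp only [Real.norm_eq_abs] at hmvt
    calc |deriv f u - deriv f a - f'' a * (u - a)|
        = |deriv f u - f'' a * u - (deriv f a - f'' a * a)| := by ring_nf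
      _ ≤ δ * |u - a| := hmvt
      _ ≤ δ * |b - a| := mul_le_mul_of_nonneg_left (abs_sub_left_of_mem_uIcc hu)
          ((abs_nonneg _).trans (hδ a left_mem_uIcc))
  have hmvt := convex_uIcc a b |>.norm_image_sub_le_of_norm_hasDerivWithin_le
    (f := fun u => f u - deriv f a * u - 1 / 2 * f'' a * (u - a) ^ 2)
    (f' := fun u => deriv f u - deriv f a - f'' a * (u - a))
    (fun u _ => (((hf u).hasDerivAt.sub ((hasDerivAt_id u).const_mul _)).sub
      (((hasDerivAt_id u).sub_const a).pow 2 |>.const_mul _)).hasDerivWithinAt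
        |>.congr_deriv (by simp; ring))
    hderiv_bound left_mem_uIcc right_mem_uIcc
  simp only [Real.norm_eq_abs] at hmvt
  calc |secondOrderRemainder f a b|
      = |f b - deriv f a * b - 1 / 2 * f'' a * (b - a) ^ 2
          - (f a - deriv f a * a - 1 / 2 * f'' a * (a - a) ^ 2)| := by
        show |f b - f a - deriv f a * (b - a) - 1 / 2 * f'' a * (b - a) ^ 2| = _
        congr 1
        ring
    _ ≤ δ * |b - a| * |b - a| := hmvt
    _ = δ * (b - a) ^ 2 := by rw [mul_assoc, ← abs_mul, ← sq, abs_sq]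

theorem Continuous.eventually_abs_sub_le_on_Icc_sub {F : ℝ → ℝ} (hF : Continuous F) (a b : ℝ)
    {η : ℝ} (hη : 0 < η) :
    ∀ᶠ ε in 𝓝[>] (0 : ℝ), ∀ t ∈ Icc a b, ∀ s ∈ Icc (t - ε) t, |F s - F t| ≤ η := by
  obtain ⟨ρ, hρ, hFρ⟩ := Metric.uniformContinuousOn_iff_le.mp
    (isCompact_Icc.uniformContinuousOn_of_continuous (hF.continuousOn (s := Icc (a - 1) b))) η hη
  filter_upwards [Ioc_mem_nhdsGT (lt_min one_pos hρ)] with ε ⟨_, hε⟩ t ht s hs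
  have hε1 : ε ≤ 1 := hε.trans (min_le_left _ _)
  have hερ : ε ≤ ρ := hε.trans (min_le_right _ _)
  refine hFρ s ⟨by linarith [ht.1, hs.1], hs.2.trans ht.2⟩ t ⟨by linarith [ht.1], ht.2⟩ ?_
  rw [Real.dist_eq, abs_of_nonpos (by linarith [hs.2])]
  linarith [hs.1]

theorem ContDiff.eventually_abs_secondOrderRemainder_comp_sub_le {f x : ℝ → ℝ}
    (hf : ContDiff ℝ 2 f) (hx : Continuous x) (a b : ℝ) {δ : ℝ} (hδ : 0 < δ) :
    ∀ᶠ ε in 𝓝[>] (0 : ℝ), ∀ s ∈ Icc a b,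
      |secondOrderRemainder f (x s) (x (s - ε))| ≤ δ * (x s - x (s - ε)) ^ 2 := by
  obtain ⟨K, hK⟩ :=
    isCompact_Icc.exists_bound_of_continuousOn (hx.continuousOn (s := Icc (a - 1) b))
  have hxK : ∀ s ∈ Icc (a - 1) b, x s ∈ Icc (-K) K := fun s hs =>
    abs_le.mp (by simpa using hK s hs)
  have hf' : ContDiff ℝ 1 (deriv f) := hf.iterate_deriv' 1 1
  obtain ⟨ρ, hρ, hf''ρ⟩ := Metric.uniformContinuousOn_iff_le.mp
    (isCompact_Icc.uniformContinuousOn_of_continuous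
      ((hf'.continuous_deriv le_rfl).continuousOn (s := Icc (-K) K))) δ hδ
  filter_upwards [hx.eventually_abs_sub_le_on_Icc_sub a b hρ, Ioc_mem_nhdsGT one_pos]
    with ε hxε hε s hs
  have hs_sub : s - ε ∈ Icc (s - ε) s := ⟨le_rfl, by linarith [hε.1]⟩
  have hxs : x s ∈ Icc (-K) K := hxK s ⟨by linarith [hs.1], hs.2⟩
  have hxs_sub : x (s - ε) ∈ Icc (-K) K :=
    hxK _ ⟨by linarith [hs.1, hε.2], by linarith [hs.2, hε.1]⟩
  calc |secondOrderRemainder f (x s) (x (s - ε))|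
      ≤ δ * (x (s - ε) - x s) ^ 2 :=
        abs_secondOrderRemainder_le (hf.differentiable two_ne_zero)
          (hf'.differentiable one_ne_zero) fun v hv =>
            hf''ρ v (uIcc_subset_Icc hxs hxs_sub hv) (x s) hxs <| by
              rw [Real.dist_eq]
              exact (abs_sub_left_of_mem_uIcc hv).trans (hxε s hs _ hs_sub)
    _ = δ * (x s - x (s - ε)) ^ 2 := by ring

theorem abs_inv_mul_integral_sub_le {F : ℝ → ℝ} (hF : Continuous F) {t ε δ : ℝ} (hε : 0 < ε)
    (hδ : ∀ s ∈ Icc (t - ε) t, |F s - F t| ≤ δ) :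
    |ε⁻¹ * (∫ s in (t - ε)..t, F s) - F t| ≤ δ := by
  have hint : ∫ s in (t - ε)..t, (F s - F t) = (∫ s in (t - ε)..t, F s) - ε * F t := by
    simp [intervalIntegral.integral_sub (hF.intervalIntegrable _ _) intervalIntegrable_const]
  have hbound : |∫ s in (t - ε)..t, (F s - F t)| ≤ δ * |t - (t - ε)| :=
    intervalIntegral.norm_integral_le_of_norm_le_const (a := t - ε) (b := t)
      (f := fun s => F s - F t) fun s hs => hδ s <|
        Ioc_subset_Icc_self (by rwa [uIoc_of_le (by linarith)] at hs)
  rw [hint, sub_sub_cancel, abs_of_pos hε] at hbound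
  calc |ε⁻¹ * (∫ s in (t - ε)..t, F s) - F t|
      = |ε⁻¹ * ((∫ s in (t - ε)..t, F s) - ε * F t)| := by
        rw [mul_sub, inv_mul_cancel_left₀ hε.ne']
    _ = ε⁻¹ * |(∫ s in (t - ε)..t, F s) - ε * F t| := by
        rw [abs_mul, abs_of_pos (inv_pos.mpr hε)]
    _ ≤ ε⁻¹ * (δ * ε) := by gcongr
    _ = δ := by field_simp

theorem Continuous.tendstoUniformlyOn_backwardAverage {F : ℝ → ℝ} (hF : Continuous F)
    (a b : ℝ) :
    TendstoUniformlyOn (fun ε t => ε⁻¹ * ∫ s in (t - ε)..t, F s) F (𝓝[>] 0) (Icc a b) := by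
  rw [Metric.tendstoUniformlyOn_iff]
  intro η hη
  filter_upwards [hF.eventually_abs_sub_le_on_Icc_sub a b (half_pos hη), self_mem_nhdsWithin]
    with ε hFε ε_pos t ht
  rw [Real.dist_eq, abs_sub_comm]
  exact (abs_inv_mul_integral_sub_le hF ε_pos (hFε t ht)).trans_lt (half_lt_self hη)

theorem integral_sub_comp_sub_right {F : ℝ → ℝ} (hF : Continuous F) (a t ε : ℝ) :
    ∫ s in a..t, (F s - F (s - ε))
      = (∫ s in (t - ε)..t, F s) - ∫ s in (a - ε)..a, F s := by
  have hi : ∀ c d : ℝ, IntervalIntegrable F volume c d := fun c d => hF.intervalIntegrable c d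
  rw [intervalIntegral.integral_sub (hi a t)
      (g := fun s => F (s - ε)) ((hF.comp (continuous_sub_right ε)).intervalIntegrable a t),
    intervalIntegral.integral_comp_sub_right F ε]
  have := intervalIntegral.integral_add_adjacent_intervals (hi (a - ε) a) (hi a t)
  have := intervalIntegral.integral_add_adjacent_intervals (hi (a - ε) (t - ε)) (hi (t - ε) t)
  linarith

theorem Continuous.tendstoUniformlyOn_inv_mul_integral_sub_comp_sub {F : ℝ → ℝ}
    (hF : Continuous F) (a b : ℝ) :
    TendstoUniformlyOn (fun ε t => ε⁻¹ * ∫ s in a..t, (F s - F (s - ε)))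
      (fun t => F t - F a) (𝓝[>] 0) (Icc a b) := by
  have hat : Tendsto (fun ε => ε⁻¹ * ∫ s in (a - ε)..a, F s) (𝓝[>] 0) (𝓝 (F a)) :=
    (hF.tendstoUniformlyOn_backwardAverage a a).tendsto_at (left_mem_Icc.mpr le_rfl)
  refine ((hF.tendstoUniformlyOn_backwardAverage a b).fun_sub
    (hat.tendstoUniformlyOn_const _)).congr (Eventually.of_forall fun ε t _ => ?_)
  simp only [integral_sub_comp_sub_right hF, mul_sub]

theorem StieltjesFunction.abs_integral_le (q : StieltjesFunction ℝ) {φ : ℝ → ℝ} {c d δ : ℝ}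
    (hcd : c ≤ d) (hφ : ∀ s ∈ Ioc c d, |φ s| ≤ δ) :
    |∫ s in c..d, φ s ∂q.measure| ≤ δ * (q d - q c) := by
  have hμ := q.measure_Ioc c d
  have hbound := norm_setIntegral_le_of_norm_le_const (μ := q.measure) (f := φ)
    (by rw [hμ]; exact ENNReal.ofReal_lt_top) hφ
  rwa [measureReal_def, hμ, ENNReal.toReal_ofReal (sub_nonneg.mpr (q.mono hcd)),
    ← intervalIntegral.integral_of_le hcd] at hbound

theorem abs_integral_mul_le {φ H : ℝ → ℝ} (hφ : Continuous φ) (hH : Continuous H) {c d δ : ℝ}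
    (hcd : c ≤ d) (hH0 : ∀ s ∈ Icc c d, 0 ≤ H s) (hφδ : ∀ s ∈ Icc c d, |φ s| ≤ δ) :
    |∫ s in c..d, φ s * H s| ≤ δ * ∫ s in c..d, H s := by
  rw [← intervalIntegral.integral_const_mul]
  refine (intervalIntegral.abs_integral_le_integral_abs hcd).trans <|
    intervalIntegral.integral_mono_on hcd ((hφ.mul hH).abs.intervalIntegrable _ _)
      ((continuous_const.mul hH).intervalIntegrable _ _) fun s hs => ?_
  rw [abs_mul, abs_of_nonneg (hH0 s hs)]
  exact mul_le_mul_of_nonneg_right (hφδ s hs) (hH0 s hs)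

theorem StieltjesFunction.abs_integral_mul_sub_integral_le (q : StieltjesFunction ℝ)
    {g H : ℝ → ℝ} (hg : Continuous g) (hH : Continuous H) {c d δ : ℝ} (hcd : c ≤ d)
    (hH0 : ∀ s ∈ Icc c d, 0 ≤ H s) (hosc : ∀ s ∈ Icc c d, |g s - g c| ≤ δ) :
    |(∫ s in c..d, g s * H s) - ∫ s in c..d, g s ∂q.measure|
      ≤ δ * ((∫ s in c..d, H s) + (q d - q c))
        + |g c| * |(∫ s in c..d, H s) - (q d - q c)| := by
  have hgc : Continuous fun s => g s - g c := hg.sub continuous_const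
  have hH_part := abs_integral_mul_le hgc hH hcd hH0 hosc
  have hq_part := q.abs_integral_le hcd fun s hs => hosc s (Ioc_subset_Icc_self hs)
  have hsplit_H : ∫ s in c..d, g s * H s
      = (∫ s in c..d, (g s - g c) * H s) + g c * ∫ s in c..d, H s := by
    rw [← intervalIntegral.integral_const_mul, ← intervalIntegral.integral_add
      (f := fun s => (g s - g c) * H s) (g := fun s => g c * H s)
      ((hgc.mul hH).intervalIntegrable _ _) ((continuous_const.mul hH).intervalIntegrable _ _)]
    congr 1 with s
    ring
  have hsplit_q : ∫ s in c..d, g s ∂q.measure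
      = (∫ s in c..d, (g s - g c) ∂q.measure) + g c * (q d - q c) := by
    rw [intervalIntegral.integral_sub (hg.intervalIntegrable _ _) intervalIntegrable_const,
      intervalIntegral.integral_of_le hcd (f := fun _ => g c), setIntegral_const,
      measureReal_def, q.measure_Ioc, ENNReal.toReal_ofReal (sub_nonneg.mpr (q.mono hcd)),
      smul_eq_mul]
    ring
  calc |(∫ s in c..d, g s * H s) - ∫ s in c..d, g s ∂q.measure|
      = |(∫ s in c..d, (g s - g c) * H s) - (∫ s in c..d, (g s - g c) ∂q.measure)
          + g c * ((∫ s in c..d, H s) - (q d - q c))| := by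
        rw [hsplit_H, hsplit_q]
        congr 1
        ring
    _ ≤ |∫ s in c..d, (g s - g c) * H s| + |∫ s in c..d, (g s - g c) ∂q.measure|
          + |g c| * |(∫ s in c..d, H s) - (q d - q c)| := by
        rw [← abs_mul]
        exact (abs_add_le _ _).trans (by gcongr; exact abs_sub _ _)
    _ ≤ _ := by linarith

theorem StieltjesFunction.abs_integral_mul_sub_integral_le_of_abs_sub_le
    (q : StieltjesFunction ℝ) {g H : ℝ → ℝ} (hg : Continuous g) (hH : Continuous H)
    {a c e M δ d : ℝ} (hce : c ≤ e) (hH0 : ∀ s ∈ Icc c e, 0 ≤ H s) (hM : |g c| ≤ M)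
    (hosc : ∀ s ∈ Icc c e, |g s - g c| ≤ δ)
    (hdc : |(∫ s in a..c, H s) - (q c - q a)| ≤ d) (hde : |(∫ s in a..e, H s) - (q e - q a)| ≤ d) :
    |(∫ s in c..e, g s * H s) - ∫ s in c..e, g s ∂q.measure|
      ≤ δ * ((∫ s in c..e, H s) + (q e - q c)) + M * (2 * d) := by
  have hdiff : |(∫ s in c..e, H s) - (q e - q c)| ≤ 2 * d := by
    rw [← intervalIntegral.integral_interval_sub_left (hH.intervalIntegrable a _)
      (hH.intervalIntegrable a _)]
    calc _ = |((∫ s in a..e, H s) - (q e - q a)) - ((∫ s in a..c, H s) - (q c - q a))| := by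
          ring_nf
      _ ≤ d + d := (abs_sub _ _).trans (add_le_add hde hdc)
      _ = 2 * d := by ring
  refine (q.abs_integral_mul_sub_integral_le hg hH hce hH0 hosc).trans ?_
  gcongr
  exact (abs_nonneg _).trans hM

theorem abs_integral_sub_integral_le_sum_abs {f g : ℝ → ℝ} (hf : Continuous f)
    (hg : Continuous g) (μ : Measure ℝ) [IsLocallyFiniteMeasure μ] (u : ℕ → ℝ) (N : ℕ) :
    |(∫ s in u 0..u N, f s) - ∫ s in u 0..u N, g s ∂μ|
      ≤ ∑ k ∈ Finset.range N, |(∫ s in u k..u (k + 1), f s) - ∫ s in u k..u (k + 1), g s ∂μ| := by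
  rw [← intervalIntegral.sum_integral_adjacent_intervals fun k _ => hf.intervalIntegrable _ _,
    ← intervalIntegral.sum_integral_adjacent_intervals fun k _ => hg.intervalIntegrable _ _,
    ← Finset.sum_sub_distrib]
  exact Finset.abs_sum_le_sum_abs _ _

theorem StieltjesFunction.abs_integral_mul_sub_integral_le_of_mesh (q : StieltjesFunction ℝ)
    {g H : ℝ → ℝ} (hg : Continuous g) (hH : Continuous H) {a b M δ d : ℝ} {N : ℕ} (hN : 0 < N)
    (hH0 : ∀ s ∈ Icc a b, 0 ≤ H s) (hM : ∀ s ∈ Icc a b, |g s| ≤ M)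
    (hosc : ∀ s ∈ Icc a b, ∀ s' ∈ Icc a b, |s - s'| ≤ (b - a) / N → |g s - g s'| ≤ δ)
    (hd : ∀ t ∈ Icc a b, |(∫ s in a..t, H s) - (q t - q a)| ≤ d) {t : ℝ} (ht : t ∈ Icc a b) :
    |(∫ s in a..t, g s * H s) - ∫ s in a..t, g s ∂q.measure|
      ≤ δ * ((∫ s in a..b, H s) + (q b - q a)) + N * (M * (2 * d)) := by
  obtain ⟨hat, htb⟩ := ht
  have hN' : (0 : ℝ) < N := Nat.cast_pos.mpr hN
  set u : ℕ → ℝ := fun k => a + k * ((t - a) / N)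
  have hmesh0 : 0 ≤ (t - a) / N := div_nonneg (sub_nonneg.mpr hat) hN'.le
  have hmesh : (t - a) / N ≤ (b - a) / N := by gcongr
  have hstep : ∀ k, u (k + 1) = u k + (t - a) / N := fun k => by simp only [u]; push_cast; ring
  have hu0 : u 0 = a := by simp [u]
  have huN : u N = t := by simp only [u]; field_simp; ring
  have hu_mem : ∀ k ≤ N, u k ∈ Icc a b := fun k hk => by
    have hk : (k : ℝ) * ((t - a) / N) ≤ N * ((t - a) / N) := by gcongr
    rw [mul_div_cancel₀ _ hN'.ne'] at hk
    exact ⟨le_add_of_nonneg_right (mul_nonneg k.cast_nonneg hmesh0), by linarith⟩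
  have hblock : ∀ k ∈ Finset.range N,
      |(∫ s in u k..u (k + 1), g s * H s) - ∫ s in u k..u (k + 1), g s ∂q.measure|
        ≤ δ * ((∫ s in u k..u (k + 1), H s) + (q (u (k + 1)) - q (u k))) + M * (2 * d) := by
    intro k hk
    have hk0 := hu_mem k (Finset.mem_range.mp hk).le
    have hk1 := hu_mem (k + 1) (Finset.mem_range.mp hk)
    have hsub : Icc (u k) (u (k + 1)) ⊆ Icc a b := Icc_subset_Icc hk0.1 hk1.2
    refine q.abs_integral_mul_sub_integral_le_of_abs_sub_le hg hH (by linarith [hstep k])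
      (fun s hs => hH0 s (hsub hs)) (hM _ hk0) (fun s hs => hosc s (hsub hs) (u k) hk0 ?_)
      (hd _ hk0) (hd _ hk1)
    rw [abs_of_nonneg (by linarith [hs.1])]
    linarith [hs.2, hstep k, hmesh]
  have hint_H : ∫ s in a..t, H s ≤ ∫ s in a..b, H s :=
    intervalIntegral.integral_mono_interval le_rfl hat htb
      ((ae_restrict_iff' measurableSet_Ioc).mpr (Eventually.of_forall
        fun s hs => hH0 s (Ioc_subset_Icc_self hs))) (hH.intervalIntegrable _ _)
  calc |(∫ s in a..t, g s * H s) - ∫ s in a..t, g s ∂q.measure|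
      ≤ ∑ k ∈ Finset.range N,
          (δ * ((∫ s in u k..u (k + 1), H s) + (q (u (k + 1)) - q (u k))) + M * (2 * d)) := by
        rw [← hu0, ← huN]
        exact (abs_integral_sub_integral_le_sum_abs (hg.mul hH) hg q.measure u N).trans
          (Finset.sum_le_sum hblock)
    _ = δ * ((∫ s in a..t, H s) + (q t - q a)) + N * (M * (2 * d)) := by
        rw [Finset.sum_add_distrib, ← Finset.mul_sum, Finset.sum_add_distrib,
          intervalIntegral.sum_integral_adjacent_intervals fun k _ => hH.intervalIntegrable _ _,
          Finset.sum_range_sub (fun k => q (u k)), hu0, huN]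
        simp
    _ ≤ δ * ((∫ s in a..b, H s) + (q b - q a)) + N * (M * (2 * d)) := by
        have := q.mono htb
        have : 0 ≤ δ := (abs_nonneg _).trans (hosc a ⟨le_rfl, hat.trans htb⟩ a
          ⟨le_rfl, hat.trans htb⟩ (by simpa using div_nonneg (by linarith) hN'.le))
        gcongr

theorem StieltjesFunction.tendstoUniformlyOn_integral_mul {ι : Type*} {l : Filter ι}
    (q : StieltjesFunction ℝ) {g : ℝ → ℝ} (hg : Continuous g) {H : ι → ℝ → ℝ}
    (hH : ∀ i, Continuous (H i)) {a b : ℝ} (hH0 : ∀ᶠ i in l, ∀ s ∈ Icc a b, 0 ≤ H i s)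
    (hHq : TendstoUniformlyOn (fun i t => ∫ s in a..t, H i s) (fun t => q t - q a) l (Icc a b)) :
    TendstoUniformlyOn (fun i t => ∫ s in a..t, g s * H i s)
      (fun t => ∫ s in a..t, g s ∂q.measure) l (Icc a b) := by
  rcases lt_or_ge b a with hba | hab
  · simp [Icc_eq_empty_of_lt hba, tendstoUniformlyOn_empty]
  rw [Metric.tendstoUniformlyOn_iff]
  intro η hη
  obtain ⟨M, hM⟩ := isCompact_Icc.exists_bound_of_continuousOn (hg.continuousOn (s := Icc a b))
  simp only [Real.norm_eq_abs] at hM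
  have hM0 : 0 ≤ M := (abs_nonneg _).trans (hM a (left_mem_Icc.mpr hab))
  have hΔq : 0 ≤ q b - q a := sub_nonneg.mpr (q.mono hab)
  -- the two error terms of `abs_integral_mul_sub_integral_le_of_mesh` become `≤ η / 2`, `≤ η / 4`
  set δ := η / (4 * (q b - q a + 1))
  obtain ⟨ρ, hρ, hgρ⟩ := Metric.uniformContinuousOn_iff_le.mp
    (isCompact_Icc.uniformContinuousOn_of_continuous (hg.continuousOn (s := Icc a b)))
    δ (by positivity)
  obtain ⟨N, hN⟩ := exists_nat_gt ((b - a) / ρ)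
  have hN0 : 0 < N := by exact_mod_cast (div_nonneg (sub_nonneg.mpr hab) hρ.le).trans_lt hN
  have hN' : (0 : ℝ) < N := Nat.cast_pos.mpr hN0
  have hosc : ∀ s ∈ Icc a b, ∀ s' ∈ Icc a b, |s - s'| ≤ (b - a) / N → |g s - g s'| ≤ δ :=
    fun s hs s' hs' hss' => hgρ s hs s' hs' <| by
      rw [Real.dist_eq]
      exact hss'.trans ((div_le_iff₀ hN').mpr (by rw [div_lt_iff₀ hρ] at hN; linarith))
  set d := min 1 (η / (8 * (N * M + 1)))
  have hd0 : 0 < d := lt_min one_pos (by positivity)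
  filter_upwards [Metric.tendstoUniformlyOn_iff.mp hHq d hd0, hH0] with i hi hi0 t ht
  have hd : ∀ t ∈ Icc a b, |(∫ s in a..t, H i s) - (q t - q a)| ≤ d := fun t ht => by
    rw [abs_sub_comm, ← Real.dist_eq]
    exact (hi t ht).le
  have hHb : ∫ s in a..b, H i s ≤ q b - q a + 1 := by
    have := (abs_le.mp (hd b (right_mem_Icc.mpr hab))).2
    linarith [min_le_left 1 (η / (8 * (N * M + 1)))]
  have hδ : δ * (2 * (q b - q a + 1)) = η / 2 := by
    simp only [δ]; field_simp; ring
  have hd' : N * (M * (2 * d)) ≤ η / 4 := by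
    have := min_le_right 1 (η / (8 * (N * M + 1)))
    calc (N : ℝ) * (M * (2 * d)) ≤ 2 * (N * M + 1) * d := by nlinarith
      _ ≤ 2 * (N * M + 1) * (η / (8 * (N * M + 1))) := by gcongr
      _ = η / 4 := by field_simp; ring
  rw [Real.dist_eq, abs_sub_comm]
  calc _ ≤ δ * ((∫ s in a..b, H i s) + (q b - q a)) + N * (M * (2 * d)) :=
        q.abs_integral_mul_sub_integral_le_of_mesh hg (hH i) hN0 hi0 hM hosc hd ht
    _ ≤ δ * (2 * (q b - q a + 1)) + η / 4 := by gcongr; linarith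
    _ < η := by linarith

theorem tendstoUniformlyOn_integral_zero_of_abs_le {ι : Type*} {l : Filter ι}
    {R H : ι → ℝ → ℝ} (hR : ∀ i, Continuous (R i)) (hH : ∀ i, Continuous (H i)) {a b C : ℝ}
    (hRH : ∀ δ > 0, ∀ᶠ i in l, ∀ s ∈ Icc a b, |R i s| ≤ δ * H i s)
    (hHC : ∀ᶠ i in l, ∀ t ∈ Icc a b, ∫ s in a..t, H i s ≤ C) :
    TendstoUniformlyOn (fun i t => ∫ s in a..t, R i s) 0 l (Icc a b) := by
  rw [Metric.tendstoUniformlyOn_iff]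
  intro η hη
  have hδ : 0 < η / (2 * (|C| + 1)) := by positivity
  filter_upwards [hRH _ hδ, hHC] with i hiR hiH t ht
  rw [Pi.zero_apply, dist_zero_left, Real.norm_eq_abs]
  calc |∫ s in a..t, R i s|
      ≤ ∫ s in a..t, |R i s| := intervalIntegral.abs_integral_le_integral_abs ht.1
    _ ≤ ∫ s in a..t, η / (2 * (|C| + 1)) * H i s :=
        intervalIntegral.integral_mono_on ht.1 ((hR i).abs.intervalIntegrable _ _)
          ((continuous_const.mul (hH i)).intervalIntegrable _ _)
          fun s hs => hiR s ⟨hs.1, hs.2.trans ht.2⟩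
    _ ≤ η / (2 * (|C| + 1)) * |C| := by
        rw [intervalIntegral.integral_const_mul]
        gcongr
        exact (hiH t ht).trans (le_abs_self C)
    _ < η := by
        rw [div_mul_eq_mul_div, div_lt_iff₀ (by positivity)]
        nlinarith [abs_nonneg C]

theorem ContDiff.tendstoUniformlyOn_integral_secondOrderRemainder {f x : ℝ → ℝ}
    (hf : ContDiff ℝ 2 f) (hx : Continuous x) {a b C : ℝ}
    (hC : ∀ᶠ ε in 𝓝[>] 0, ∀ t ∈ Icc a b, ∫ s in a..t, ε⁻¹ * (x s - x (s - ε)) ^ 2 ≤ C) :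
    TendstoUniformlyOn
      (fun ε t => ∫ s in a..t, ε⁻¹ * secondOrderRemainder f (x s) (x (s - ε))) 0
      (𝓝[>] 0) (Icc a b) := by
  have hf1 : Continuous (deriv f) := (hf.iterate_deriv' 1 1).continuous
  have hf2 : Continuous (deriv (deriv f)) := (hf.iterate_deriv' 0 2).continuous
  have hf0 := hf.continuous
  refine tendstoUniformlyOn_integral_zero_of_abs_le
    (fun ε => by simp only [secondOrderRemainder]; fun_prop) (fun ε => by fun_prop)
    (fun δ hδ => ?_) hC
  filter_upwards [hf.eventually_abs_secondOrderRemainder_comp_sub_le hx a b hδ,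
    self_mem_nhdsWithin] with ε hε hε0 s hs
  rw [abs_mul, abs_of_pos (inv_pos.mpr hε0), mul_left_comm]
  exact mul_le_mul_of_nonneg_left (hε s hs) (inv_pos.mpr hε0).le

theorem ContDiff.inv_mul_integral_deriv_comp_mul_sub_eq {f x : ℝ → ℝ} (hf : ContDiff ℝ 2 f)
    (hx : Continuous x) (a t ε : ℝ) :
    ε⁻¹ * ∫ s in a..t, deriv f (x s) * (x s - x (s - ε))
      = ε⁻¹ * (∫ s in a..t, (f (x s) - f (x (s - ε))))
        + (∫ s in a..t, 1 / 2 * deriv (deriv f) (x s) * (ε⁻¹ * (x s - x (s - ε)) ^ 2))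
        + ∫ s in a..t, ε⁻¹ * secondOrderRemainder f (x s) (x (s - ε)) := by
  have hf1 : Continuous (deriv f) := (hf.iterate_deriv' 1 1).continuous
  have hf2 : Continuous (deriv (deriv f)) := (hf.iterate_deriv' 0 2).continuous
  have hf0 := hf.continuous
  simp only [← intervalIntegral.integral_const_mul, secondOrderRemainder]
  rw [← intervalIntegral.integral_add, ← intervalIntegral.integral_add]
  · congr 1 with s
    ring
  all_goals exact Continuous.intervalIntegrable (by fun_prop) _ _

theorem stmt_13_general (T : ℝ) (x : ℝ → ℝ) (hx : Continuous x)
    (q : ℝ → ℝ) (hq_mono : Monotone q) (hq_cont : Continuous q) (hq0 : q 0 = 0)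
    (hquad : TendstoUniformlyOn
      (fun ε t => ε⁻¹ * ∫ s in (0:ℝ)..t, (x s - x (s - ε)) ^ 2) q
      (nhdsWithin 0 (Set.Ioi 0)) (Set.Icc 0 T))
    (f : ℝ → ℝ) (hf : ContDiff ℝ 2 f) :
    TendstoUniformlyOn
      (fun ε t => ε⁻¹ * ∫ s in (0:ℝ)..t, deriv f (x s) * (x s - x (s - ε)))
      (fun t => f (x t) - f (x 0) +
        (1/2) * lsIntegral q (fun s => deriv (deriv f) (x s)) t)
      (nhdsWithin 0 (Set.Ioi 0)) (Set.Icc 0 T) := by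
  have hq : Monotone q ∧ ∀ a, ContinuousWithinAt q (Ici a) a :=
    ⟨hq_mono, fun a => hq_cont.continuousWithinAt⟩
  set qS : StieltjesFunction ℝ := ⟨q, hq.1, hq.2⟩
  have hquad' : TendstoUniformlyOn (fun ε t => ∫ s in (0 : ℝ)..t, ε⁻¹ * (x s - x (s - ε)) ^ 2)
      (fun t => qS t - qS 0) (𝓝[>] 0) (Icc 0 T) :=
    (hquad.congr (Eventually.of_forall fun ε t _ => (intervalIntegral.integral_const_mul _ _).symm)
      ).congr_right fun t _ => by simp [qS, hq0]
  have hF := (hf.continuous.comp hx).tendstoUniformlyOn_inv_mul_integral_sub_comp_sub 0 T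
  have hQ := qS.tendstoUniformlyOn_integral_mul
    (g := fun s => 1 / 2 * deriv (deriv f) (x s)) (H := fun ε s => ε⁻¹ * (x s - x (s - ε)) ^ 2)
    (by fun_prop) (fun ε => by fun_prop)
    (eventually_mem_nhdsWithin.mono fun ε hε s _ =>
      mul_nonneg (inv_nonneg.mpr (le_of_lt hε)) (sq_nonneg _)) hquad'
  have hR := hf.tendstoUniformlyOn_integral_secondOrderRemainder hx (C := q T + 1) <| by
    filter_upwards [Metric.tendstoUniformlyOn_iff.mp hquad' 1 one_pos] with ε hε t ht
    have := hε t ht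
    simp only [qS, Real.dist_eq, abs_lt] at this
    linarith [hq_mono ht.2]
  refine ((hF.fun_add hQ).fun_add hR).congr (Eventually.of_forall fun ε t _ =>
    (hf.inv_mul_integral_deriv_comp_mul_sub_eq hx 0 t ε).symm) |>.congr_right fun t ht => ?_
  simp only [lsIntegral, dif_pos hq, Pi.zero_apply, add_zero, Function.comp_apply]
  rw [intervalIntegral.integral_of_le ht.1, integral_const_mul]

/-- (Pathwise Russo–Vallois Itô formula.) If `x` is continuous with
quadratic variation function `q` (i.e. `C_ε(x,x) → q` uniformly on `[0,T]` as `ε → 0⁺`,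
`q` nondecreasing, continuous, `q 0 = 0`) and `f` is `C²`, then
`ε⁻¹ ∫₀ᵗ f'(x s)(x s - x (s-ε)) ds` converges uniformly on `[0,T]` to
`f (x t) - f (x 0) + (1/2) ∫_{(0,t]} f'' (x s) dq s`; in particular the backward
Russo–Vallois integral `∫₀ᵗ f'(x s) dx s` exists and equals the latter. -/
theorem stmt_13 (T : ℝ) (hT : 0 < T) (x : ℝ → ℝ) (hx : Continuous x)
    (q : ℝ → ℝ) (hq_mono : Monotone q) (hq_cont : Continuous q) (hq0 : q 0 = 0)
    (hquad : TendstoUniformlyOn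
      (fun ε t => ε⁻¹ * ∫ s in (0:ℝ)..t, (x s - x (s - ε)) ^ 2) q
      (nhdsWithin 0 (Set.Ioi 0)) (Set.Icc 0 T))
    (f : ℝ → ℝ) (hf : ContDiff ℝ 2 f) :
    TendstoUniformlyOn
      (fun ε t => ε⁻¹ * ∫ s in (0:ℝ)..t, deriv f (x s) * (x s - x (s - ε)))
      (fun t => f (x t) - f (x 0) +
        (1/2) * lsIntegral q (fun s => deriv (deriv f) (x s)) t)
      (nhdsWithin 0 (Set.Ioi 0)) (Set.Icc 0 T) :=
  stmt_13_general T x hx q hq_mono hq_cont hq0 hquad f hf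
end

section
/- Let T > 0, let h : ℝ → ℝ be continuous, and let (q_ε)_{ε>0} and q be nondecreasing continuous functions ℝ → ℝ with q_ε(0) = q(0) = 0, such that sup_{t∈[0,T]} |q_ε(t) − q(t)| → 0 as ε → 0⁺. Then sup_{t∈[0,T]} | ∫_{(0,t]} h dq_ε − ∫_{(0,t]} h dq | → 0 as ε → 0⁺, where the integrals are Lebesgue–Stieltjes integrals. -/
open MeasureTheory

/-! On a uniform grid of mesh `t / n`, the integral `∫_{(0,t]} h dq` differs from the
Riemann–Stieltjes sum `∑ h(xᵢ) (q(xᵢ₊₁) - q(xᵢ))` by at most the oscillation of `h` at that mesh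
times the mass `q t - q 0`; by uniform continuity of `h` on `[0,T]` this is small uniformly in
`t` once `n` is large. For a fixed `n`, the Riemann–Stieltjes sums of `Q ε` and of `q` differ by
at most `2 n sup|h| sup|Q ε - q|`. So one chooses `n` first and then `ε`. -/

open Set Finset

namespace StieltjesFunction

variable (f : StieltjesFunction ℝ)

theorem measureReal_Ioc {a b : ℝ} (hab : a ≤ b) : f.measure.real (Ioc a b) = f b - f a := by
  rw [measureReal_def, f.measure_Ioc, ENNReal.toReal_ofReal (sub_nonneg.2 (f.mono hab))]

theorem abs_setIntegral_Ioc_sub_mul_le {h : ℝ → ℝ} {a b c ω : ℝ} (hab : a ≤ b)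
    (hint : IntegrableOn h (Ioc a b) f.measure) (hω : ∀ s ∈ Ioc a b, |h s - c| ≤ ω) :
    |∫ s in Ioc a b, h s ∂f.measure - c * (f b - f a)| ≤ ω * (f b - f a) := by
  have hfin : f.measure (Ioc a b) ≠ ⊤ := by simp [f.measure_Ioc]
  have hsub : ∫ s in Ioc a b, h s ∂f.measure - c * (f b - f a)
      = ∫ s in Ioc a b, (h s - c) ∂f.measure := by
    rw [integral_sub hint (integrableOn_const hfin), setIntegral_const, f.measureReal_Ioc hab,
      smul_eq_mul, mul_comm]
  rw [hsub, ← f.measureReal_Ioc hab]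
  exact norm_setIntegral_le_of_norm_le_const hfin.lt_top fun s hs =>
    (Real.norm_eq_abs _).trans_le (hω s hs)

end StieltjesFunction

noncomputable def uniformGrid (a b : ℝ) (n i : ℕ) : ℝ := a + i * ((b - a) / n)

section uniformGrid

variable {a b : ℝ} {n : ℕ}

@[simp] theorem uniformGrid_zero : uniformGrid a b n 0 = a := by simp [uniformGrid]

theorem uniformGrid_self (hn : n ≠ 0) : uniformGrid a b n n = b := by
  simp only [uniformGrid]
  field_simp
  ring

theorem uniformGrid_succ_sub (i : ℕ) :
    uniformGrid a b n (i + 1) - uniformGrid a b n i = (b - a) / n := by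
  simp only [uniformGrid]
  push_cast
  ring

theorem uniformGrid_mono (hab : a ≤ b) : Monotone (uniformGrid a b n) := by
  intro i j hij
  simp only [uniformGrid]
  gcongr

theorem uniformGrid_mem_Icc (hab : a ≤ b) {i : ℕ} (hi : i ≤ n) :
    uniformGrid a b n i ∈ Icc a b := by
  rcases Nat.eq_zero_or_pos n with rfl | hn
  · simp [Nat.le_zero.1 hi, hab]
  constructor
  · simpa using uniformGrid_mono (n := n) hab (Nat.zero_le i)
  · simpa [uniformGrid_self hn.ne'] using uniformGrid_mono (n := n) hab hi

end uniformGrid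

noncomputable def riemannStieltjesSum (f h : ℝ → ℝ) (a b : ℝ) (n : ℕ) : ℝ :=
  ∑ i ∈ range n, h (uniformGrid a b n i) *
    (f (uniformGrid a b n (i + 1)) - f (uniformGrid a b n i))

theorem StieltjesFunction.abs_setIntegral_Ioc_sub_riemannStieltjesSum_le
    (f : StieltjesFunction ℝ) {h : ℝ → ℝ} {a b ω : ℝ} {n : ℕ} (hab : a ≤ b) (hn : n ≠ 0)
    (hint : IntegrableOn h (Ioc a b) f.measure)
    (hω : ∀ x ∈ Icc a b, ∀ y ∈ Icc a b, |x - y| ≤ (b - a) / n → |h x - h y| ≤ ω) :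
    |∫ s in Ioc a b, h s ∂f.measure - riemannStieltjesSum f h a b n| ≤ ω * (f b - f a) := by
  set x := uniformGrid a b n
  have hx : Monotone x := uniformGrid_mono hab
  have hcell_sub : ∀ i < n, Ioc (x i) (x (i + 1)) ⊆ Ioc a b := fun i hi =>
    Ioc_subset_Ioc (uniformGrid_mem_Icc hab hi.le).1 (uniformGrid_mem_Icc hab hi).2
  have hcell : ∀ i ∈ range n, |∫ s in Ioc (x i) (x (i + 1)), h s ∂f.measure
      - h (x i) * (f (x (i + 1)) - f (x i))| ≤ ω * (f (x (i + 1)) - f (x i)) := by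
    intro i hi
    have hi : i < n := Finset.mem_range.1 hi
    refine f.abs_setIntegral_Ioc_sub_mul_le (hx i.le_succ) (hint.mono_set (hcell_sub i hi))
      fun s hs => hω s (Ioc_subset_Icc_self (hcell_sub i hi hs)) _
        (uniformGrid_mem_Icc hab hi.le) ?_
    rw [abs_of_nonneg (sub_nonneg.2 hs.1.le), ← uniformGrid_succ_sub i]
    linarith [hs.2]
  have hsplit : ∫ s in Ioc a b, h s ∂f.measure
      = ∑ i ∈ range n, ∫ s in Ioc (x i) (x (i + 1)), h s ∂f.measure := by
    have hx0 : x 0 = a := uniformGrid_zero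
    have hxn : x n = b := uniformGrid_self hn
    rw [← intervalIntegral.integral_of_le hab, ← hx0, ← hxn,
      ← intervalIntegral.sum_integral_adjacent_intervals fun i hi =>
        (intervalIntegrable_iff_integrableOn_Ioc_of_le (hx i.le_succ)).2
          (hint.mono_set (hcell_sub i hi))]
    exact Finset.sum_congr rfl fun i _ => intervalIntegral.integral_of_le (hx i.le_succ)
  have htelescope : f b - f a = ∑ i ∈ range n, (f (x (i + 1)) - f (x i)) := by
    rw [Finset.sum_range_sub (fun i => f (x i))]
    simp [x, uniformGrid_self hn]
  rw [hsplit, riemannStieltjesSum, ← Finset.sum_sub_distrib, htelescope, Finset.mul_sum]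
  exact (Finset.abs_sum_le_sum_abs _ _).trans (Finset.sum_le_sum hcell)

theorem abs_riemannStieltjesSum_sub_le {f g h : ℝ → ℝ} {a b M η : ℝ} {n : ℕ} (hab : a ≤ b)
    (hM : ∀ x ∈ Icc a b, |h x| ≤ M) (hη : ∀ x ∈ Icc a b, |f x - g x| ≤ η) :
    |riemannStieltjesSum f h a b n - riemannStieltjesSum g h a b n| ≤ n * (2 * M * η) := by
  set x := uniformGrid a b n
  have hterm : ∀ i ∈ range n, |h (x i) * (f (x (i + 1)) - f (x i))
      - h (x i) * (g (x (i + 1)) - g (x i))| ≤ 2 * M * η := by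
    intro i hi
    have hi : i < n := Finset.mem_range.1 hi
    have hxi := uniformGrid_mem_Icc hab hi.le
    have hxi' := uniformGrid_mem_Icc hab hi
    have hdiff : |(f (x (i + 1)) - g (x (i + 1))) - (f (x i) - g (x i))| ≤ 2 * η := by
      linarith [abs_sub (f (x (i + 1)) - g (x (i + 1))) (f (x i) - g (x i)), hη _ hxi, hη _ hxi']
    calc _ = |h (x i)| * |(f (x (i + 1)) - g (x (i + 1))) - (f (x i) - g (x i))| := by
          rw [← abs_mul]; ring_nf
      _ ≤ M * (2 * η) := mul_le_mul (hM _ hxi) hdiff (abs_nonneg _)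
          ((abs_nonneg _).trans (hM _ hxi))
      _ = 2 * M * η := by ring
  rw [riemannStieltjesSum, riemannStieltjesSum, ← Finset.sum_sub_distrib]
  refine (Finset.abs_sum_le_sum_abs _ _).trans ?_
  simpa using Finset.sum_le_sum hterm

theorem StieltjesFunction.abs_setIntegral_Ioc_sub_setIntegral_Ioc_le (f g : StieltjesFunction ℝ)
    {h : ℝ → ℝ} {a b t ω M η : ℝ} {n : ℕ} (ht : t ∈ Icc a b) (hn : n ≠ 0) (hh : Continuous h)
    (hω : ∀ x ∈ Icc a b, ∀ y ∈ Icc a b, |x - y| ≤ (b - a) / n → |h x - h y| ≤ ω)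
    (hM : ∀ x ∈ Icc a b, |h x| ≤ M) (hη : ∀ x ∈ Icc a b, |f x - g x| ≤ η) :
    |∫ s in Ioc a t, h s ∂f.measure - ∫ s in Ioc a t, h s ∂g.measure|
      ≤ ω * ((f t - f a) + (g t - g a)) + n * (2 * M * η) := by
  have hsub : Icc a t ⊆ Icc a b := Icc_subset_Icc_right ht.2
  have hω' : ∀ x ∈ Icc a t, ∀ y ∈ Icc a t, |x - y| ≤ (t - a) / n → |h x - h y| ≤ ω :=
    fun x hx y hy hxy => hω x (hsub hx) y (hsub hy)
      (hxy.trans (div_le_div_of_nonneg_right (by linarith [ht.2]) n.cast_nonneg))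
  have hf := f.abs_setIntegral_Ioc_sub_riemannStieltjesSum_le ht.1 hn hh.integrableOn_Ioc hω'
  have hg := g.abs_setIntegral_Ioc_sub_riemannStieltjesSum_le ht.1 hn hh.integrableOn_Ioc hω'
  have hfg := abs_riemannStieltjesSum_sub_le (n := n) ht.1
    (fun x hx => hM x (hsub hx)) (fun x hx => hη x (hsub hx))
  have htri := abs_sub_le (∫ s in Ioc a t, h s ∂f.measure) (riemannStieltjesSum f h a t n)
    (∫ s in Ioc a t, h s ∂g.measure)
  have htri' := abs_sub_le (riemannStieltjesSum f h a t n) (riemannStieltjesSum g h a t n)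
    (∫ s in Ioc a t, h s ∂g.measure)
  rw [abs_sub_comm (riemannStieltjesSum g h a t n)] at htri'
  linarith

theorem ContinuousOn.exists_nat_ne_zero_abs_sub_le {h : ℝ → ℝ} {a b ω : ℝ}
    (hh : ContinuousOn h (Icc a b)) (hω : 0 < ω) :
    ∃ n : ℕ, n ≠ 0 ∧ ∀ x ∈ Icc a b, ∀ y ∈ Icc a b, |x - y| ≤ (b - a) / n → |h x - h y| ≤ ω := by
  obtain ⟨d, hd, hhd⟩ := Metric.uniformContinuousOn_iff.1
    (isCompact_Icc.uniformContinuousOn_of_continuous hh) ω hω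
  obtain ⟨n, hn⟩ := exists_nat_gt ((b - a) / d)
  have hmesh : (b - a) / (n + 1 : ℕ) < d := by
    rw [div_lt_iff₀ hd] at hn
    rw [div_lt_iff₀ (by positivity)]
    push_cast
    nlinarith
  exact ⟨n + 1, n.succ_ne_zero, fun x hx y hy hxy =>
    (hhd x hx y hy (by rw [Real.dist_eq]; exact hxy.trans_lt hmesh)).le⟩

theorem Monotone.sub_le_sub_add_of_abs_sub_le {f g : ℝ → ℝ} (hf : Monotone f) {a b t η : ℝ}
    (ht : t ∈ Icc a b) (hη : ∀ x ∈ Icc a b, |f x - g x| ≤ η) : f t - f a ≤ g b - g a + 2 * η := by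
  have hb := abs_le.1 (hη b ⟨ht.1.trans ht.2, le_rfl⟩)
  have ha := abs_le.1 (hη a ⟨le_rfl, ht.1.trans ht.2⟩)
  linarith [hf ht.2]

theorem lsIntegral_stieltjesFunction (f : StieltjesFunction ℝ) (h : ℝ → ℝ) (t : ℝ) :
    lsIntegral f h t = ∫ s in Ioc 0 t, h s ∂f.measure :=
  dif_pos ⟨f.mono, f.right_continuous⟩

theorem stmt_14_general (T : ℝ) (h : ℝ → ℝ) (hh : Continuous h)
    (Q : ℝ → ℝ → ℝ) (q : ℝ → ℝ)
    (hQmono : ∀ ε > (0:ℝ), Monotone (Q ε)) (hQcont : ∀ ε > (0:ℝ), Continuous (Q ε))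
    (hqmono : Monotone q) (hqcont : Continuous q)
    (hconv : TendstoUniformlyOn Q q (nhdsWithin 0 (Set.Ioi 0)) (Set.Icc 0 T)) :
    TendstoUniformlyOn (fun ε t => lsIntegral (Q ε) h t) (fun t => lsIntegral q h t)
      (nhdsWithin 0 (Set.Ioi 0)) (Set.Icc 0 T) := by
  rw [Metric.tendstoUniformlyOn_iff] at hconv ⊢
  intro δ hδ
  obtain ⟨M, hM⟩ := (isCompact_Icc (a := 0) (b := T)).exists_bound_of_continuousOn hh.continuousOn
  simp only [Real.norm_eq_abs] at hM
  obtain ⟨ω, hω, hωδ⟩ := exists_pos_mul_lt (half_pos hδ) (2 * (q T - q 0) + 2)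
  obtain ⟨n, hn, hmesh⟩ := hh.continuousOn.exists_nat_ne_zero_abs_sub_le (a := 0) (b := T) hω
  obtain ⟨η, hη, hηδ⟩ := exists_pos_mul_lt (half_pos hδ) (n * (2 * M))
  filter_upwards [hconv η hη, hconv 1 one_pos, self_mem_nhdsWithin] with ε hεη hε1 hε t ht
  let F : StieltjesFunction ℝ := ⟨Q ε, hQmono ε hε, fun _ => (hQcont ε hε).continuousWithinAt⟩
  let G : StieltjesFunction ℝ := ⟨q, hqmono, fun _ => hqcont.continuousWithinAt⟩
  have hmassF : F t - F 0 ≤ q T - q 0 + 2 * 1 := (hQmono ε hε).sub_le_sub_add_of_abs_sub_le ht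
    fun x hx => by rw [abs_sub_comm]; exact (hε1 x hx).le
  have hmassG : G t - G 0 ≤ q T - q 0 := sub_le_sub_right (hqmono ht.2) _
  show |lsIntegral G h t - lsIntegral F h t| < δ
  rw [lsIntegral_stieltjesFunction, lsIntegral_stieltjesFunction]
  calc _ ≤ ω * ((G t - G 0) + (F t - F 0)) + n * (2 * M * η) :=
        G.abs_setIntegral_Ioc_sub_setIntegral_Ioc_le F ht hn hh hmesh hM fun x hx => (hεη x hx).le
    _ ≤ (2 * (q T - q 0) + 2) * ω + n * (2 * M) * η := by
      linarith [mul_le_mul_of_nonneg_left (add_le_add hmassG hmassF) hω.le]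
    _ < δ / 2 + δ / 2 := add_lt_add hωδ hηδ
    _ = δ := add_halves δ

/-- If `h` is continuous, `(Q ε)_{ε>0}` and `q` are nondecreasing
continuous functions vanishing at `0` with `Q ε → q` uniformly on `[0,T]` as `ε → 0⁺`,
then `t ↦ ∫_{(0,t]} h d(Q ε)` converges to `t ↦ ∫_{(0,t]} h dq` uniformly on `[0,T]`
as `ε → 0⁺`. -/
theorem stmt_14 (T : ℝ) (hT : 0 < T) (h : ℝ → ℝ) (hh : Continuous h)
    (Q : ℝ → ℝ → ℝ) (q : ℝ → ℝ)
    (hQmono : ∀ ε > (0:ℝ), Monotone (Q ε)) (hQcont : ∀ ε > (0:ℝ), Continuous (Q ε))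
    (hQ0 : ∀ ε > (0:ℝ), Q ε 0 = 0)
    (hqmono : Monotone q) (hqcont : Continuous q) (hq0 : q 0 = 0)
    (hconv : TendstoUniformlyOn Q q (nhdsWithin 0 (Set.Ioi 0)) (Set.Icc 0 T)) :
    TendstoUniformlyOn (fun ε t => lsIntegral (Q ε) h t) (fun t => lsIntegral q h t)
      (nhdsWithin 0 (Set.Ioi 0)) (Set.Icc 0 T) :=
  stmt_14_general T h hh Q q hQmono hQcont hqmono hqcont hconv
end
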